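/- arXiv:0909.2606 — 7 statements merged into one kernel-verified Lean document; each statement's English description precedes it below -/
import Mathlib

section
/- Let g : ℝ^d → ℝ^d be bounded and Lipschitz continuous with Lipschitz constant L < 1. For ε ∈ (0,1], define Φ_ε : C([0,∞), ℝ^d) → C([0,∞), ℝ^d) by (Φ_ε ω)(t) = ω(t) + ε g(ω(t)/ε). Let (μ_ε)_{ε∈(0,1]} be a family of Borel probability measures on C([0,∞), ℝ^d). Then the family {μ_ε : ε ∈ (0,1]} is tight if and only if the family of pushforward measures {(Φ_ε)_* μ_ε : ε ∈ (0,1]} is tight. -/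
open MeasureTheory Set
open scoped NNReal ENNReal

noncomputable section

/-- The path space `C([0,∞), ℝ^d)` with the topology of uniform convergence on compacts. -/
abbrev PathSpace (d : ℕ) := C(ℝ≥0, EuclideanSpace ℝ (Fin d))

instance pathSpaceMeasurableSpace (d : ℕ) : MeasurableSpace (PathSpace d) := borel _

instance pathSpaceBorelSpace (d : ℕ) : BorelSpace (PathSpace d) := ⟨rfl⟩

/-! For `0 < ε ≤ 1` the map `h_ε x = x + ε g(x/ε)` moves every point by at most `M` and is
bi-Lipschitz with constants `1 + L` and `(1 - L)⁻¹`, uniformly in `ε`, and `Φ_ε ω = h_ε ∘ ω`.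
Hence `Φ_ε ω` and `ω` stay within `M` of each other and each has the modulus of continuity of
the other up to a fixed factor. By Arzelà–Ascoli, the paths controlled in this way by the paths
of a compact set form a relatively compact set; its closure is the compact set needed on the
other side, in either direction. -/

namespace MeasureTheory.IsTightMeasureSet

variable {ι X Y : Type*} [TopologicalSpace X] [MeasurableSpace X] [TopologicalSpace Y]
  [MeasurableSpace Y] {s : Set ι} {μ : ι → Measure X} {F : ι → X → Y}

lemma image_map_of_mapsTo [OpensMeasurableSpace Y] [T2Space Y]
    (hF : ∀ K, IsCompact K → ∃ K', IsCompact K' ∧ ∀ i ∈ s, MapsTo (F i) K K')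
    (h : IsTightMeasureSet (μ '' s)) : IsTightMeasureSet ((fun i ↦ (μ i).map (F i)) '' s) := by
  simp only [isTightMeasureSet_iff_exists_isCompact_measure_compl_le, forall_mem_image] at *
  intro δ hδ
  obtain ⟨K, hK, hμK⟩ := h δ hδ
  obtain ⟨K', hK', hFK⟩ := hF K hK
  refine ⟨K', hK', fun i hi ↦ ?_⟩
  by_cases hFi : AEMeasurable (F i) (μ i)
  · rw [Measure.map_apply_of_aemeasurable hFi hK'.isClosed.measurableSet.compl]
    exact (measure_mono (compl_subset_compl.mpr (hFK i hi).subset_preimage)).trans (hμK hi)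
  · simp [Measure.map_of_not_aemeasurable hFi]

lemma of_image_map (hFm : ∀ i ∈ s, AEMeasurable (F i) (μ i))
    (hF : ∀ K, IsCompact K → ∃ K', IsCompact K' ∧ ∀ i ∈ s, F i ⁻¹' K ⊆ K')
    (h : IsTightMeasureSet ((fun i ↦ (μ i).map (F i)) '' s)) : IsTightMeasureSet (μ '' s) := by
  simp only [isTightMeasureSet_iff_exists_isCompact_measure_compl_le, forall_mem_image] at *
  intro δ hδ
  obtain ⟨K, hK, hμK⟩ := h δ hδ
  obtain ⟨K', hK', hFK⟩ := hF K hK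
  refine ⟨K', hK', fun i hi ↦ ?_⟩
  calc μ i K'ᶜ ≤ μ i (F i ⁻¹' Kᶜ) := measure_mono (compl_subset_compl.mpr (hFK i hi))
    _ ≤ (μ i).map (F i) Kᶜ := Measure.le_map_apply (hFm i hi) _
    _ ≤ δ := hμK hi

end MeasureTheory.IsTightMeasureSet

theorem IsCompact.equicontinuous_coe {X α : Type*} [TopologicalSpace X] [LocallyCompactSpace X]
    [UniformSpace α] {K : Set C(X, α)} (hK : IsCompact K) :
    Equicontinuous ((↑) : K → X → α) := by
  have : CompactSpace K := isCompact_iff_compactSpace.mp hK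
  let evalK : C(X, C(K, α)) := ContinuousMap.curry
    ⟨fun p : X × K ↦ (p.2 : C(X, α)) p.1,
      continuous_eval.comp ((continuous_subtype_val.comp continuous_snd).prodMk continuous_fst)⟩
  intro x
  rw [equicontinuousAt_iff_continuousAt, ContinuousAt, UniformFun.tendsto_iff_tendstoUniformly]
  exact ContinuousMap.tendsto_iff_tendstoUniformly.mp (evalK.continuous.tendsto x)

namespace ContinuousMap

variable {X E : Type*} [TopologicalSpace X] [MetricSpace E]

def IsControlledBy (a : ℝ≥0) (b : ℝ) (ψ ω : C(X, E)) : Prop :=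
  (∀ s t, dist (ψ s) (ψ t) ≤ a * dist (ω s) (ω t)) ∧ ∀ t, dist (ψ t) (ω t) ≤ b

theorem isCompact_closure_of_isControlledBy [LocallyCompactSpace X] [ProperSpace E]
    {a : ℝ≥0} {b : ℝ} {K S : Set C(X, E)} (hK : IsCompact K)
    (hS : ∀ ψ ∈ S, ∃ ω ∈ K, IsControlledBy a b ψ ω) : IsCompact (closure S) := by
  have hcover : ⋃₀ {Q : Set X | IsCompact Q} = univ :=
    sUnion_eq_univ_iff.2 fun x ↦ ⟨{x}, isCompact_singleton, rfl⟩
  have : T2Space (UniformOnFun X E {Q : Set X | IsCompact Q}) :=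
    UniformOnFun.t2Space_of_covering hcover
  have hemb := isUniformEmbedding_toUniformOnFunIsCompact (α := X) (β := E)
  have hSeq : Equicontinuous ((↑) : S → X → E) := by
    intro x
    have hKx := Metric.equicontinuousAt_iff_right.mp (hK.equicontinuous_coe x)
    refine Metric.equicontinuousAt_iff_right.mpr fun ε hε ↦ ?_
    filter_upwards [hKx (ε / (a + 1)) (by positivity)] with y hy ψ
    obtain ⟨ω, hωK, hmod, -⟩ := hS ψ ψ.2
    calc dist (ψ.1 x) (ψ.1 y) ≤ a * dist (ω x) (ω y) := hmod x y
      _ ≤ a * (ε / (a + 1)) := by gcongr; exact (hy ⟨ω, hωK⟩).le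
      _ < (a + 1) * (ε / (a + 1)) := by gcongr; exact lt_add_one _
      _ = ε := mul_div_cancel₀ _ (by positivity)
  refine ArzelaAscoli.isCompact_closure_of_isClosedEmbedding (𝔖 := {Q : Set X | IsCompact Q})
    (F := fun f : C(X, E) ↦ ⇑f) (fun _ ↦ id) ⟨hemb.isEmbedding, hemb.isUniformInducing.isComplete_range.isClosed⟩
    (fun Q _ ↦ hSeq.equicontinuousOn Q) fun _ _ x _ ↦ ?_
  refine ⟨Metric.cthickening b ((fun f : C(X, E) ↦ f x) '' K),
    (hK.image (continuous_eval_const x)).cthickening, fun ψ hψ ↦ ?_⟩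
  obtain ⟨ω, hωK, -, hdist⟩ := hS ψ hψ
  exact Metric.mem_cthickening_of_dist_le _ _ _ _ (mem_image_of_mem _ hωK) (hdist x)

theorem isCompact_mapsTo_comp_of_lipschitzWith [LocallyCompactSpace X] [ProperSpace E]
    {ι : Type*} {s : Set ι} {h : ι → C(E, E)} {a : ℝ≥0} {b : ℝ}
    (hlip : ∀ i ∈ s, LipschitzWith a (h i)) (hdist : ∀ i ∈ s, ∀ x, dist (h i x) x ≤ b)
    {K : Set C(X, E)} (hK : IsCompact K) :
    ∃ K', IsCompact K' ∧ ∀ i ∈ s, MapsTo (h i).comp K K' :=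
  ⟨_, isCompact_closure_of_isControlledBy (S := {ψ | ∃ ω ∈ K, IsControlledBy a b ψ ω}) hK
    fun _ ↦ id, fun i hi ω hω ↦ subset_closure
      ⟨ω, hω, fun _ _ ↦ (hlip i hi).dist_le_mul _ _, fun _ ↦ hdist i hi _⟩⟩

theorem isCompact_preimage_comp_subset_of_antilipschitzWith [LocallyCompactSpace X]
    [ProperSpace E] {ι : Type*} {s : Set ι} {h : ι → C(E, E)} {a : ℝ≥0} {b : ℝ}
    (hanti : ∀ i ∈ s, AntilipschitzWith a (h i)) (hdist : ∀ i ∈ s, ∀ x, dist (h i x) x ≤ b)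
    {K : Set C(X, E)} (hK : IsCompact K) :
    ∃ K', IsCompact K' ∧ ∀ i ∈ s, (h i).comp ⁻¹' K ⊆ K' :=
  ⟨_, isCompact_closure_of_isControlledBy (S := {ψ | ∃ ω ∈ K, IsControlledBy a b ψ ω}) hK
    fun _ ↦ id, fun i hi _ hψ ↦ subset_closure
      ⟨_, hψ, fun _ _ ↦ (hanti i hi).le_mul_dist _ _, fun _ ↦ dist_comm (h i _) _ ▸ hdist i hi _⟩⟩

theorem isTightMeasureSet_image_map_comp_iff [LocallyCompactSpace X] [ProperSpace E]
    [MeasurableSpace C(X, E)] [BorelSpace C(X, E)] {ι : Type*} {s : Set ι}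
    {μ : ι → Measure C(X, E)} {h : ι → C(E, E)} {a a' : ℝ≥0} {b : ℝ}
    (hlip : ∀ i ∈ s, LipschitzWith a (h i)) (hanti : ∀ i ∈ s, AntilipschitzWith a' (h i))
    (hdist : ∀ i ∈ s, ∀ x, dist (h i x) x ≤ b) :
    IsTightMeasureSet ((fun i ↦ (μ i).map (h i).comp) '' s) ↔ IsTightMeasureSet (μ '' s) :=
  ⟨IsTightMeasureSet.of_image_map (fun i _ ↦ (continuous_postcomp (h i)).aemeasurable)
      fun _ hK ↦ isCompact_preimage_comp_subset_of_antilipschitzWith hanti hdist hK,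
    IsTightMeasureSet.image_map_of_mapsTo
      fun _ hK ↦ isCompact_mapsTo_comp_of_lipschitzWith hlip hdist hK⟩

end ContinuousMap

theorem LipschitzWith.smul_comp_inv_smul {𝕜 E F : Type*} [NormedField 𝕜]
    [SeminormedAddCommGroup E] [NormedSpace 𝕜 E] [SeminormedAddCommGroup F] [NormedSpace 𝕜 F]
    {g : E → F} {L : ℝ≥0} (hg : LipschitzWith L g) (c : 𝕜) :
    LipschitzWith L fun x ↦ c • g (c⁻¹ • x) := by
  rcases eq_or_ne c 0 with rfl | hc
  · simpa using (LipschitzWith.const (0 : F)).weaken zero_le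
  · refine ((lipschitzWith_smul c).comp (hg.comp (lipschitzWith_smul c⁻¹))).weaken (le_of_eq ?_)
    rw [nnnorm_inv, mul_left_comm, mul_inv_cancel₀ (nnnorm_ne_zero_iff.mpr hc), mul_one]

theorem tight_iff_corrected_tight_general (d : ℕ)
    (g : EuclideanSpace ℝ (Fin d) → EuclideanSpace ℝ (Fin d))
    (M : ℝ) (hgbdd : ∀ x, ‖g x‖ ≤ M) (L : ℝ≥0) (hL : (L : ℝ) < 1) (hgLip : LipschitzWith L g)
    (Φ : ℝ → PathSpace d → PathSpace d)
    (hΦ : ∀ ε ∈ Set.Ioc (0 : ℝ) 1, ∀ (ω : PathSpace d) (t : ℝ≥0),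
      Φ ε ω t = ω t + ε • g (ε⁻¹ • ω t))
    (μ : ℝ → Measure (PathSpace d)) :
    (∀ δ : ℝ≥0∞, 0 < δ → ∃ K : Set (PathSpace d), IsCompact K ∧
        ∀ ε ∈ Set.Ioc (0 : ℝ) 1, μ ε Kᶜ ≤ δ) ↔
      (∀ δ : ℝ≥0∞, 0 < δ → ∃ K : Set (PathSpace d), IsCompact K ∧
        ∀ ε ∈ Set.Ioc (0 : ℝ) 1, (μ ε).map (Φ ε) Kᶜ ≤ δ) := by
  have hcorr (ε : ℝ) : LipschitzWith L fun x ↦ ε • g (ε⁻¹ • x) := hgLip.smul_comp_inv_smul ε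
  let h (ε : ℝ) : C(EuclideanSpace ℝ (Fin d), EuclideanSpace ℝ (Fin d)) :=
    ⟨fun x ↦ x + ε • g (ε⁻¹ • x), continuous_id.add (hcorr ε).continuous⟩
  have hdist : ∀ ε ∈ Ioc (0 : ℝ) 1, ∀ x, dist (h ε x) x ≤ M := fun ε hε x ↦ by
    change ‖x + ε • g (ε⁻¹ • x) - x‖ ≤ M
    rw [add_sub_cancel_left, norm_smul]
    exact (mul_le_of_le_one_left (norm_nonneg _) (by simpa [abs_of_pos hε.1] using hε.2)).trans
      (hgbdd _)
  have hΦh : EqOn Φ (fun ε ↦ (h ε).comp) (Ioc 0 1) :=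
    fun ε hε ↦ funext fun ω ↦ ContinuousMap.ext (hΦ ε hε ω)
  have hlip (ε : ℝ) : LipschitzWith (1 + L) (h ε) := LipschitzWith.id.add (hcorr ε)
  have hanti (ε : ℝ) : AntilipschitzWith (1⁻¹ - L)⁻¹ (h ε) :=
    AntilipschitzWith.id.add_lipschitzWith (hcorr ε) (by simpa using hL)
  have key := ContinuousMap.isTightMeasureSet_image_map_comp_iff (μ := μ)
    (fun ε _ ↦ hlip ε) (fun ε _ ↦ hanti ε) hdist
  rw [← image_congr fun ε hε ↦ congrArg (Measure.map · (μ ε)) (hΦh hε)] at key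
  simpa only [isTightMeasureSet_iff_exists_isCompact_measure_compl_le, forall_mem_image]
    using key.symm

/-- Let `g` be bounded and Lipschitz with constant `L < 1`, and let
`Φ_ε ω (t) = ω(t) + ε g(ω(t)/ε)`. A family `(μ_ε)_{ε ∈ (0,1]}` of Borel probability measures
on path space is tight if and only if the family of pushforwards `((Φ_ε)_* μ_ε)_{ε ∈ (0,1]}`
is tight. -/
theorem tight_iff_corrected_tight (d : ℕ)
    (g : EuclideanSpace ℝ (Fin d) → EuclideanSpace ℝ (Fin d))
    (M : ℝ) (hgbdd : ∀ x, ‖g x‖ ≤ M) (L : ℝ≥0) (hL : (L : ℝ) < 1) (hgLip : LipschitzWith L g)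
    (Φ : ℝ → PathSpace d → PathSpace d)
    (hΦ : ∀ ε ∈ Set.Ioc (0 : ℝ) 1, ∀ (ω : PathSpace d) (t : ℝ≥0),
      Φ ε ω t = ω t + ε • g (ε⁻¹ • ω t))
    (μ : ℝ → Measure (PathSpace d)) (hμ : ∀ ε ∈ Set.Ioc (0 : ℝ) 1, IsProbabilityMeasure (μ ε)) :
    (∀ δ : ℝ≥0∞, 0 < δ → ∃ K : Set (PathSpace d), IsCompact K ∧
        ∀ ε ∈ Set.Ioc (0 : ℝ) 1, μ ε Kᶜ ≤ δ) ↔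
      (∀ δ : ℝ≥0∞, 0 < δ → ∃ K : Set (PathSpace d), IsCompact K ∧
        ∀ ε ∈ Set.Ioc (0 : ℝ) 1, (μ ε).map (Φ ε) Kᶜ ≤ δ) :=
  tight_iff_corrected_tight_general d g M hgbdd L hL hgLip Φ hΦ μ

end
end

section
/- Let b_V > 0 and ℓ > 0. There exists a constant C > 0, depending only on b_V and ℓ, such that for every ε ∈ (0,1] the following holds: if u : [−ℓε, ℓε] → ℝ is continuously differentiable on [−ℓε, ℓε], twice continuously differentiable on [−ℓε, 0] and on [0, ℓε], and satisfies (1/2)u''(x) − (b_V/ε) u'(x) = −1 for all x ∈ (0, ℓε), (1/2)u''(x) + (b_V/ε) u'(x) = −1 for all x ∈ (−ℓε, 0), and u(−ℓε) = u(ℓε) = 0, then sup_{x ∈ [−ℓε, ℓε]} |u(x)| ≤ C ε². -/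
/-!
On each half of the interval the equation is a first-order linear equation for `u'`, so `u` is
explicit up to the constants `u 0` and `u' 0`. The two boundary conditions force `u' 0 = 0`, and
then `u x = c (|x| - L) + (c / k) (exp (k L) - exp (k |x|))` with `k = 2 b_V / ε`, `c = ε / b_V`,
`L = ℓ ε`. Both terms are of order `ε²` because `k L = 2 b_V ℓ` does not depend on `ε`.
-/

open Set Real

section LinearODE

variable {a b : ℝ}

theorem eq_of_hasDerivWithinAt_Icc_of_eq_zero {f f' : ℝ → ℝ}
    (hf : ∀ x ∈ Icc a b, HasDerivWithinAt f (f' x) (Icc a b) x)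
    (h0 : ∀ x ∈ Ioo a b, f' x = 0) {x y : ℝ} (hx : x ∈ Icc a b) (hy : y ∈ Icc a b) :
    f x = f y := by
  have hcont : ContinuousOn f (Icc a b) := fun z hz => (hf z hz).continuousWithinAt
  have hderiv : ∀ z ∈ interior (Icc a b), HasDerivWithinAt f (f' z) (interior (Icc a b)) z :=
    fun z hz => (hf z (interior_subset hz)).mono interior_subset
  have hzero : ∀ z ∈ interior (Icc a b), f' z = 0 :=
    fun z hz => h0 z (by rwa [interior_Icc] at hz)
  have hmono := monotoneOn_of_hasDerivWithinAt_nonneg (convex_Icc a b) hcont hderiv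
    fun z hz => (hzero z hz).ge
  have hanti := antitoneOn_of_hasDerivWithinAt_nonpos (convex_Icc a b) hcont hderiv
    fun z hz => (hzero z hz).le
  rcases le_total x y with hxy | hyx
  · exact le_antisymm (hmono hx hy hxy) (hanti hx hy hxy)
  · exact le_antisymm (hanti hy hx hyx) (hmono hy hx hyx)

theorem eq_add_mul_exp_of_hasDerivWithinAt_Icc {g g' : ℝ → ℝ} {k c x₀ : ℝ}
    (hg : ∀ x ∈ Icc a b, HasDerivWithinAt g (g' x) (Icc a b) x)
    (hode : ∀ x ∈ Ioo a b, g' x = k * (g x - c)) (hx₀ : x₀ ∈ Icc a b) :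
    ∀ x ∈ Icc a b, g x = c + (g x₀ - c) * exp (k * (x - x₀)) := by
  intro x hx
  have hconst : (g x - c) * exp (-(k * (x - x₀))) = (g x₀ - c) * exp (-(k * (x₀ - x₀))) :=
    eq_of_hasDerivWithinAt_Icc_of_eq_zero
      (fun y hy => ((hg y hy).sub_const c).mul
        (((hasDerivAt_id' y).sub_const x₀).const_mul k).neg.exp.hasDerivWithinAt)
      (fun y hy => by rw [hode y hy]; ring) hx hx₀
  rw [sub_self, mul_zero, neg_zero, exp_zero, mul_one, exp_neg, ← div_eq_mul_inv,
    div_eq_iff (exp_pos _).ne'] at hconst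
  linarith

theorem eq_add_mul_add_div_mul_exp_of_hasDerivWithinAt_Icc {u u' : ℝ → ℝ} {k c A x₀ : ℝ}
    (hk : k ≠ 0) (hu : ∀ x ∈ Icc a b, HasDerivWithinAt u (u' x) (Icc a b) x)
    (hu' : ∀ x ∈ Ioo a b, u' x = c + A * exp (k * (x - x₀))) (hx₀ : x₀ ∈ Icc a b) :
    ∀ x ∈ Icc a b, u x = u x₀ + c * (x - x₀) + A / k * (exp (k * (x - x₀)) - 1) := by
  intro x hx
  have hconst :
      u x - c * (x - x₀) - A / k * exp (k * (x - x₀))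
        = u x₀ - c * (x₀ - x₀) - A / k * exp (k * (x₀ - x₀)) :=
    eq_of_hasDerivWithinAt_Icc_of_eq_zero
      (fun y hy => ((hu y hy).sub
        (((hasDerivAt_id' y).sub_const x₀).const_mul c).hasDerivWithinAt).sub
        ((((hasDerivAt_id' y).sub_const x₀).const_mul k).exp.const_mul (A / k)).hasDerivWithinAt)
      (fun y hy => by rw [hu' y hy]; field_simp; ring) hx hx₀
  simp only [sub_self, mul_zero, exp_zero] at hconst
  linear_combination hconst

theorem eq_of_secondDeriv_eq_mul_sub {u u' u'' : ℝ → ℝ} {k c x₀ : ℝ} (hk : k ≠ 0)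
    (hu : ∀ x ∈ Icc a b, HasDerivWithinAt u (u' x) (Icc a b) x)
    (hu' : ∀ x ∈ Icc a b, HasDerivWithinAt u' (u'' x) (Icc a b) x)
    (hode : ∀ x ∈ Ioo a b, u'' x = k * (u' x - c)) (hx₀ : x₀ ∈ Icc a b) :
    ∀ x ∈ Icc a b,
      u x = u x₀ + c * (x - x₀) + (u' x₀ - c) / k * (exp (k * (x - x₀)) - 1) :=
  eq_add_mul_add_div_mul_exp_of_hasDerivWithinAt_Icc hk hu
    (fun x hx => eq_add_mul_exp_of_hasDerivWithinAt_Icc hu' hode hx₀ x (Ioo_subset_Icc_self hx))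
    hx₀

end LinearODE

noncomputable def exitTimeProfile (k c L t : ℝ) : ℝ :=
  c * (t - L) + c / k * (exp (k * L) - exp (k * t))

theorem abs_exitTimeProfile_le {k c L t : ℝ} (hk : 0 < k) (hc : 0 ≤ c) (ht : t ∈ Icc 0 L) :
    |exitTimeProfile k c L t| ≤ c * L + c / k * exp (k * L) := by
  have hck : 0 ≤ c / k := div_nonneg hc hk.le
  have hlin_nonpos : c * (t - L) ≤ 0 := mul_nonpos_of_nonneg_of_nonpos hc (by linarith [ht.2])
  have hlin_ge : -(c * L) ≤ c * (t - L) := by nlinarith [ht.1]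
  have hexp_nonneg : 0 ≤ c / k * (exp (k * L) - exp (k * t)) :=
    mul_nonneg hck (sub_nonneg.2 (exp_le_exp.2 (mul_le_mul_of_nonneg_left ht.2 hk.le)))
  have hexp_le : c / k * (exp (k * L) - exp (k * t)) ≤ c / k * exp (k * L) :=
    mul_le_mul_of_nonneg_left (by linarith [exp_pos (k * t)]) hck
  rw [exitTimeProfile, abs_le]
  constructor <;> linarith

theorem eq_exitTimeProfile_abs {k c L : ℝ} (hk : 0 < k) (hL : 0 < L)
    {u u' u''p u''m : ℝ → ℝ}
    (hu : ∀ x ∈ Icc (-L) L, HasDerivWithinAt u (u' x) (Icc (-L) L) x)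
    (hup : ∀ x ∈ Icc 0 L, HasDerivWithinAt u' (u''p x) (Icc 0 L) x)
    (hum : ∀ x ∈ Icc (-L) 0, HasDerivWithinAt u' (u''m x) (Icc (-L) 0) x)
    (hodep : ∀ x ∈ Ioo 0 L, u''p x = k * (u' x - c))
    (hodem : ∀ x ∈ Ioo (-L) 0, u''m x = -k * (u' x - -c))
    (hleft : u (-L) = 0) (hright : u L = 0) :
    ∀ x ∈ Icc (-L) L, u x = exitTimeProfile k c L |x| := by
  have hsubp : Icc 0 L ⊆ Icc (-L) L := Icc_subset_Icc (by linarith) le_rfl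
  have hsubm : Icc (-L) 0 ⊆ Icc (-L) L := Icc_subset_Icc le_rfl (by linarith)
  have hplus := eq_of_secondDeriv_eq_mul_sub hk.ne' (fun x hx => (hu x (hsubp hx)).mono hsubp)
    hup hodep (left_mem_Icc.2 hL.le)
  have hminus := eq_of_secondDeriv_eq_mul_sub (neg_ne_zero.2 hk.ne')
    (fun x hx => (hu x (hsubm hx)).mono hsubm) hum hodem (right_mem_Icc.2 (by linarith))
  simp only [sub_zero] at hplus hminus
  have hR := hplus L (right_mem_Icc.2 hL.le)
  have hL' := hminus (-L) (left_mem_Icc.2 (by linarith))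
  rw [hright] at hR
  rw [hleft, neg_mul_neg k L] at hL'
  have hE : exp (k * L) - 1 ≠ 0 := (sub_pos.2 (one_lt_exp_iff.2 (by positivity))).ne'
  have hslope : u' 0 = 0 := by
    have h : u' 0 * ((exp (k * L) - 1) * (2 / k)) = 0 := by linear_combination hL' - hR
    simpa [hE, hk.ne'] using h
  rw [hslope] at hR
  intro x hx
  rcases le_total 0 x with hx0 | hx0
  · rw [abs_of_nonneg hx0, exitTimeProfile, hplus x ⟨hx0, hx.2⟩, hslope]
    linear_combination -hR
  · rw [abs_of_nonpos hx0, exitTimeProfile, hminus x ⟨hx.1, hx0⟩, hslope, ← neg_mul_comm]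
    linear_combination -hR

/-- Uniform bound `sup |u| ≤ C ε²` for the solution of the boundary value
problem `(1/2)u'' − (b_V/ε) u' = −1` on `(0, ℓε)`, `(1/2)u'' + (b_V/ε) u' = −1` on `(−ℓε, 0)`,
`u(±ℓε) = 0`, associated to the worst-case diffusion with inward drift `b_V/ε`.
Here `u'` is the derivative of `u` on `[−ℓε, ℓε]` (assumed continuous there), and
`u''₊`, `u''₋` are the derivatives of `u'` on `[0, ℓε]` and `[−ℓε, 0]` respectively
(assumed continuous on the respective closed intervals). -/
theorem worst_case_exit_time_bound (bV ℓ : ℝ) (hbV : 0 < bV) (hℓ : 0 < ℓ) :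
    ∃ C : ℝ, 0 < C ∧ ∀ ε ∈ Set.Ioc (0 : ℝ) 1, ∀ u u' u''p u''m : ℝ → ℝ,
      (∀ x ∈ Icc (-(ℓ * ε)) (ℓ * ε), HasDerivWithinAt u (u' x) (Icc (-(ℓ * ε)) (ℓ * ε)) x) →
      ContinuousOn u' (Icc (-(ℓ * ε)) (ℓ * ε)) →
      (∀ x ∈ Icc 0 (ℓ * ε), HasDerivWithinAt u' (u''p x) (Icc 0 (ℓ * ε)) x) →
      ContinuousOn u''p (Icc 0 (ℓ * ε)) →
      (∀ x ∈ Icc (-(ℓ * ε)) 0, HasDerivWithinAt u' (u''m x) (Icc (-(ℓ * ε)) 0) x) →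
      ContinuousOn u''m (Icc (-(ℓ * ε)) 0) →
      (∀ x ∈ Ioo 0 (ℓ * ε), (1 / 2) * u''p x - (bV / ε) * u' x = -1) →
      (∀ x ∈ Ioo (-(ℓ * ε)) 0, (1 / 2) * u''m x + (bV / ε) * u' x = -1) →
      u (-(ℓ * ε)) = 0 → u (ℓ * ε) = 0 →
      ∀ x ∈ Icc (-(ℓ * ε)) (ℓ * ε), |u x| ≤ C * ε ^ 2 := by
  refine ⟨ℓ / bV + exp (2 * bV * ℓ) / (2 * bV ^ 2), by positivity, ?_⟩
  rintro ε ⟨hε, -⟩ u u' u''p u''m hu - hup - hum - hodep hodem hleft hright x hx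
  have hk : 0 < 2 * bV / ε := by positivity
  have hkc : 2 * bV / ε * (ε / bV) = 2 := by field_simp
  have hkL : 2 * bV / ε * (ℓ * ε) = 2 * bV * ℓ := by field_simp
  have hprofile := eq_exitTimeProfile_abs (c := ε / bV) hk (by positivity) hu hup hum
    (fun y hy => by linear_combination 2 * hodep y hy + hkc)
    (fun y hy => by linear_combination 2 * hodem y hy + hkc) hleft hright x hx
  rw [hprofile]
  calc |exitTimeProfile (2 * bV / ε) (ε / bV) (ℓ * ε) (|x|)|
      ≤ ε / bV * (ℓ * ε) + ε / bV / (2 * bV / ε) * exp (2 * bV / ε * (ℓ * ε)) :=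
        abs_exitTimeProfile_le hk (by positivity) ⟨abs_nonneg x, abs_le.2 hx⟩
    _ = (ℓ / bV + exp (2 * bV * ℓ) / (2 * bV ^ 2)) * ε ^ 2 := by
        rw [hkL]; field_simp
end

section
/- Let d ≥ 2, let p_+, p_− ≥ 0 with p_+ + p_− = 1, let α_2, …, α_d ∈ ℝ and C > 0. Let f : ℝ^d → ℝ be continuous and bounded, whose restrictions to the closed half-spaces {x_1 ≥ 0} and {x_1 ≤ 0} are C² with bounded first and second partial derivatives, whose partial derivatives ∂_j f for j ≥ 2 are continuous on all of ℝ^d, and whose one-sided limits ∂_1 f|_+ and ∂_1 f|_− at the hyperplane {x_1 = 0} satisfy the gluing condition p_+ ∂_1 f|_+(x) − p_− ∂_1 f|_−(x) + Σ_{j=2}^d α_j ∂_j f(x) = 0 for every x with x_1 = 0. Let δ_n → 0 be positive reals, η_n ≥ 0 with η_n/δ_n → 0, let x_n ∈ ℝ^d with |x_{n,1}| ≤ η_n, and let Z_n be random vectors in ℝ^d such that: |Z_{n,1}| = δ_n almost surely; P(Z_{n,1} = δ_n) → p_+; for each j = 2, …, d, E[Z_{n,j} − x_{n,j}] = α_j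 δ_n + o(δ_n) and E[(Z_{n,j} − x_{n,j})²] ≤ C δ_n². Then (E[f(Z_n)] − f(x_n))/δ_n → 0 as n → ∞. -/
/-!
Project `x` to the point `y` of the interface `{z 0 = 0}` with the same tangential coordinates.
Since `f` is Lipschitz on each closed half-space, `f y - f x = O(|x 0|) = o(δ)`. On each side,
Taylor's formula at `y` shows that `f z - f y` is, up to `O(‖z - y‖²)`, the one-sided
linearization `(∂₀f₊(y) or ∂₀f₋(y), by the sign of z 0) · z 0 + Σⱼ ∂ⱼf(y) (zⱼ - xⱼ)`, because the
tangential derivatives of `f₊` and `f₋` agree on the interface. As `|Z 0| = δ`, the expectation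
of this linearization is `δ (P(Z 0 = δ) (∂₀f₊ + ∂₀f₋) - ∂₀f₋) + Σⱼ ∂ⱼf(y) E[Zⱼ - xⱼ]`, and
subtracting `δ` times the gluing identity at `y` leaves
`δ (P(Z 0 = δ) - p₊) (∂₀f₊ + ∂₀f₋) + Σⱼ ∂ⱼf(y) (E[Zⱼ - xⱼ] - αⱼ δ) = o(δ)`.
The Taylor remainders contribute `O(δ²)` by the second moment bounds.
-/

open MeasureTheory Filter Topology

section Taylor

variable {E : Type*} [NormedAddCommGroup E] [NormedSpace ℝ E] {g : E → ℝ} {M : ℝ}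

theorem norm_sub_sub_fderiv_apply_le_of_norm_iteratedFDeriv_two_le (hg : ContDiff ℝ 2 g)
    (hM : ∀ z, ‖iteratedFDeriv ℝ 2 g z‖ ≤ M) (x y : E) :
    ‖g y - g x - fderiv ℝ g x (y - x)‖ ≤ M * ‖y - x‖ ^ 2 := by
  have hdiff : Differentiable ℝ (fderiv ℝ g) :=
    (hg.fderiv_right le_rfl).differentiable one_ne_zero
  have hD2 : ∀ z, ‖fderiv ℝ (fderiv ℝ g) z‖ ≤ M := fun z => by
    rw [← norm_iteratedFDeriv_one, norm_iteratedFDeriv_fderiv]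
    exact hM z
  have hM0 : 0 ≤ M := (norm_nonneg _).trans (hM x)
  set r := ‖y - x‖
  have hball : ∀ z ∈ Metric.closedBall x r, ‖fderiv ℝ g z - fderiv ℝ g x‖ ≤ M * r := by
    intro z hz
    calc ‖fderiv ℝ g z - fderiv ℝ g x‖ ≤ M * ‖z - x‖ :=
          convex_univ.norm_image_sub_le_of_norm_fderiv_le (fun z _ => hdiff z)
            (fun z _ => hD2 z) trivial trivial
      _ ≤ M * r := by gcongr; rwa [← dist_eq_norm]
  calc ‖g y - g x - fderiv ℝ g x (y - x)‖ ≤ M * r * r :=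
        (convex_closedBall x r).norm_image_sub_le_of_norm_hasFDerivWithin_le'
          (fun z _ => ((hg.differentiable two_ne_zero z).hasFDerivAt).hasFDerivWithinAt)
          hball (Metric.mem_closedBall_self (norm_nonneg _))
          (by rw [Metric.mem_closedBall, dist_eq_norm])
    _ = M * r ^ 2 := by ring

end Taylor

section Probability

variable {Ω : Type*} [MeasurableSpace Ω] {P : Measure Ω}

theorem abs_integral_sub_sub_le_of_abs_sub_le [IsProbabilityMeasure P] {W T R : Ω → ℝ}
    (hW : AEStronglyMeasurable W P) (hT : Integrable T P) (hR : Integrable R P) {k M : ℝ}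
    (h : ∀ᵐ ω ∂P, |W ω - k - T ω| ≤ M * R ω) :
    |∫ ω, W ω ∂P - k - ∫ ω, T ω ∂P| ≤ M * ∫ ω, R ω ∂P := by
  have hD : Integrable (fun ω => W ω - k - T ω) P :=
    (hR.const_mul M).mono' ((hW.sub aestronglyMeasurable_const).sub hT.1) h
  have hWi : Integrable W P :=
    ((hD.add hT).add (integrable_const k)).congr (.of_forall fun ω => by simp)
  have hWk : Integrable (fun ω => W ω - k) P := hWi.sub (integrable_const k)
  calc |∫ ω, W ω ∂P - k - ∫ ω, T ω ∂P| = ‖∫ ω, (W ω - k - T ω) ∂P‖ := by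
        rw [integral_sub hWk hT, integral_sub hWi (integrable_const k),
          integral_const, Real.norm_eq_abs]
        simp
    _ ≤ ∫ ω, M * R ω ∂P := norm_integral_le_of_norm_le (hR.const_mul M) h
    _ = M * ∫ ω, R ω ∂P := integral_const_mul M R

theorem ite_mul_ae_eq_indicator_sub {X : Ω → ℝ} {δ : ℝ} (h : ∀ᵐ ω ∂P, |X ω| = δ) (a b : ℝ) :
    (fun ω => (if 0 < X ω then a else b) * X ω)
      =ᵐ[P] fun ω => {ω | X ω = δ}.indicator (fun _ => δ * (a + b)) ω - δ * b := by
  filter_upwards [h] with ω hω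
  rcases (hω ▸ abs_nonneg (X ω)).eq_or_lt with rfl | hδ
  · simp [abs_eq_zero.1 hω]
  · rcases (abs_eq hδ.le).1 hω with hX | hX
    · rw [Set.indicator_of_mem (s := {ω | X ω = δ}) hX, if_pos (hX ▸ hδ), hX]
      ring
    · rw [Set.indicator_of_notMem (s := {ω | X ω = δ}) (fun h' : X ω = δ => by linarith),
        if_neg (by linarith), hX]
      ring

theorem integrable_ite_mul_of_abs_eq [IsFiniteMeasure P] {X : Ω → ℝ} (hX : Measurable X) {δ : ℝ}
    (h : ∀ᵐ ω ∂P, |X ω| = δ) (a b : ℝ) :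
    Integrable (fun ω => (if 0 < X ω then a else b) * X ω) P :=
  (((integrable_const _).indicator (measurableSet_eq_fun hX measurable_const)).sub
    (integrable_const _)).congr (ite_mul_ae_eq_indicator_sub h a b).symm

theorem integral_ite_mul_of_abs_eq [IsProbabilityMeasure P] {X : Ω → ℝ} (hX : Measurable X)
    {δ : ℝ} (h : ∀ᵐ ω ∂P, |X ω| = δ) (a b : ℝ) :
    ∫ ω, (if 0 < X ω then a else b) * X ω ∂P = δ * (P.real {ω | X ω = δ} * (a + b) - b) := by
  rw [integral_congr_ae (ite_mul_ae_eq_indicator_sub h a b),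
    integral_sub ((integrable_const _).indicator (measurableSet_eq_fun hX measurable_const))
      (integrable_const _),
    integral_indicator_const _ (measurableSet_eq_fun hX measurable_const), integral_const]
  simp only [probReal_univ, smul_eq_mul]
  ring

end Probability

section Asymptotics

variable {ι : Type*} {l : Filter ι} {δ : ι → ℝ}

theorem tendsto_div_of_abs_sub_le {u v η : ι → ℝ} {A B : ℝ} (hδ : ∀ n, 0 < δ n)
    (hδ0 : Tendsto δ l (𝓝 0)) (hηδ : Tendsto (fun n => η n / δ n) l (𝓝 0))
    (h : ∀ n, |u n - v n| ≤ A * δ n ^ 2 + B * η n)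
    (hv : Tendsto (fun n => v n / δ n) l (𝓝 0)) :
    Tendsto (fun n => u n / δ n) l (𝓝 0) := by
  have hbound : Tendsto (fun n => A * δ n + B * (η n / δ n)) l (𝓝 0) := by
    simpa using (hδ0.const_mul A).add (hηδ.const_mul B)
  have hsub : Tendsto (fun n => (u n - v n) / δ n) l (𝓝 0) := by
    refine squeeze_zero_norm (fun n => ?_) hbound
    rw [Real.norm_eq_abs, abs_div, abs_of_pos (hδ n), div_le_iff₀ (hδ n)]
    calc |u n - v n| ≤ A * δ n ^ 2 + B * η n := h n
      _ = (A * δ n + B * (η n / δ n)) * δ n := by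
        rw [add_mul, mul_assoc B, div_mul_cancel₀ _ (hδ n).ne']
        ring
  simpa [sub_div] using hsub.add hv

theorem tendsto_firstOrder_div_of_gluing {κ : Type*} (s : Finset κ) {q a b : ι → ℝ}
    {c m : ι → κ → ℝ} {pp pm M : ℝ} {α : κ → ℝ} (hδ : ∀ n, δ n ≠ 0) (hsum : pp + pm = 1)
    (hq : Tendsto q l (𝓝 pp)) (hm : ∀ j ∈ s, Tendsto (fun n => m n j / δ n) l (𝓝 (α j)))
    (ha : ∀ n, |a n| ≤ M) (hb : ∀ n, |b n| ≤ M) (hc : ∀ n j, |c n j| ≤ M)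
    (hglue : ∀ n, pp * a n - pm * b n + ∑ j ∈ s, α j * c n j = 0) :
    Tendsto (fun n => (δ n * (q n * (a n + b n) - b n) + ∑ j ∈ s, c n j * m n j) / δ n)
      l (𝓝 0) := by
  have hrw (n : ι) : (δ n * (q n * (a n + b n) - b n) + ∑ j ∈ s, c n j * m n j) / δ n
      = (q n - pp) * (a n + b n) + ∑ j ∈ s, (m n j / δ n - α j) * c n j := by
    have hsplit : ∑ j ∈ s, (m n j / δ n - α j) * c n j
        = (∑ j ∈ s, c n j * m n j) / δ n - ∑ j ∈ s, α j * c n j := by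
      rw [Finset.sum_div, ← Finset.sum_sub_distrib]
      exact Finset.sum_congr rfl fun j _ => by ring
    rw [hsplit, add_div, mul_div_cancel_left₀ _ (hδ n)]
    linear_combination hglue n + b n * hsum
  simp_rw [hrw]
  have hbdd {g : ι → ℝ} {K : ℝ} (hg : ∀ n, |g n| ≤ K) :
      IsBoundedUnder (· ≤ ·) l ((‖·‖) ∘ g) :=
    isBoundedUnder_of ⟨K, hg⟩
  have h1 : Tendsto (fun n => (q n - pp) * (a n + b n)) l (𝓝 0) :=
    (tendsto_sub_nhds_zero_iff.2 hq).zero_mul_isBoundedUnder_le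
      (hbdd fun n => (abs_add_le _ _).trans (add_le_add (ha n) (hb n)))
  have h2 : Tendsto (fun n => ∑ j ∈ s, (m n j / δ n - α j) * c n j) l (𝓝 0) := by
    simpa using tendsto_finsetSum s fun j hj =>
      (tendsto_sub_nhds_zero_iff.2 (hm j hj)).zero_mul_isBoundedUnder_le (hbdd fun n => hc n j)
  simpa using h1.add h2

end Asymptotics

section Interface

variable {d : ℕ}

theorem abs_apply_single_le (L : EuclideanSpace ℝ (Fin d) →L[ℝ] ℝ) (j : Fin d) :
    |L (EuclideanSpace.single j 1)| ≤ ‖L‖ := by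
  simpa using L.le_opNorm (EuclideanSpace.single j 1)

variable [NeZero d]

noncomputable def interfaceProj (x : EuclideanSpace ℝ (Fin d)) : EuclideanSpace ℝ (Fin d) :=
  x - x 0 • EuclideanSpace.single 0 1

@[simp]
theorem interfaceProj_apply_zero (x : EuclideanSpace ℝ (Fin d)) : interfaceProj x 0 = 0 := by
  simp [interfaceProj]

theorem interfaceProj_apply_of_ne (x : EuclideanSpace ℝ (Fin d)) {j : Fin d} (hj : j ≠ 0) :
    interfaceProj x j = x j := by
  simp [interfaceProj, hj]

theorem norm_interfaceProj_sub (x : EuclideanSpace ℝ (Fin d)) :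
    ‖interfaceProj x - x‖ = |x 0| := by
  simp [interfaceProj, norm_smul]

theorem apply_eq_mul_add_sum_erase (L : EuclideanSpace ℝ (Fin d) →L[ℝ] ℝ)
    (v : EuclideanSpace ℝ (Fin d)) :
    L v = v 0 * L (EuclideanSpace.single 0 1)
      + ∑ j ∈ Finset.univ.erase 0, v j * L (EuclideanSpace.single j 1) := by
  conv_lhs => rw [← (EuclideanSpace.basisFun (Fin d) ℝ).sum_repr v]
  simp

theorem norm_sq_eq_sq_add_sum_erase (v : EuclideanSpace ℝ (Fin d)) :
    ‖v‖ ^ 2 = v 0 ^ 2 + ∑ j ∈ Finset.univ.erase 0, v j ^ 2 := by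
  simp [EuclideanSpace.norm_sq_eq]

variable {f fp fm : EuclideanSpace ℝ (Fin d) → ℝ} {M : ℝ}

theorem measurable_of_eq_on_halfSpaces (hfp : Continuous fp) (hfm : Continuous fm)
    (hagreep : ∀ z : EuclideanSpace ℝ (Fin d), 0 ≤ z 0 → f z = fp z)
    (hagreem : ∀ z : EuclideanSpace ℝ (Fin d), z 0 ≤ 0 → f z = fm z) :
    Measurable f := by
  have hf : f = fun z => if 0 ≤ z 0 then fp z else fm z := funext fun z => by
    split_ifs with hz
    exacts [hagreep z hz, hagreem z (le_of_not_ge hz)]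
  rw [hf]
  exact Measurable.ite (measurableSet_le measurable_const (by fun_prop))
    hfp.measurable hfm.measurable

theorem abs_interfaceProj_sub_le (hfp : Differentiable ℝ fp) (hfm : Differentiable ℝ fm)
    (hMp : ∀ z, ‖fderiv ℝ fp z‖ ≤ M) (hMm : ∀ z, ‖fderiv ℝ fm z‖ ≤ M)
    (hagreep : ∀ z : EuclideanSpace ℝ (Fin d), 0 ≤ z 0 → f z = fp z)
    (hagreem : ∀ z : EuclideanSpace ℝ (Fin d), z 0 ≤ 0 → f z = fm z)
    (x : EuclideanSpace ℝ (Fin d)) :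
    |f (interfaceProj x) - f x| ≤ M * |x 0| := by
  rw [← norm_interfaceProj_sub, ← Real.norm_eq_abs]
  rcases le_total 0 (x 0) with hx | hx
  · rw [hagreep x hx, hagreep _ (interfaceProj_apply_zero x).ge]
    exact convex_univ.norm_image_sub_le_of_norm_fderiv_le (fun z _ => hfp z) (fun z _ => hMp z)
      trivial trivial
  · rw [hagreem x hx, hagreem _ (interfaceProj_apply_zero x).le]
    exact convex_univ.norm_image_sub_le_of_norm_fderiv_le (fun z _ => hfm z) (fun z _ => hMm z)
      trivial trivial

theorem abs_sub_sub_ite_fderiv_le (hfp : ContDiff ℝ 2 fp) (hfm : ContDiff ℝ 2 fm)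
    (hMp : ∀ z, ‖iteratedFDeriv ℝ 2 fp z‖ ≤ M) (hMm : ∀ z, ‖iteratedFDeriv ℝ 2 fm z‖ ≤ M)
    (hagreep : ∀ z : EuclideanSpace ℝ (Fin d), 0 ≤ z 0 → f z = fp z)
    (hagreem : ∀ z : EuclideanSpace ℝ (Fin d), z 0 ≤ 0 → f z = fm z)
    {y : EuclideanSpace ℝ (Fin d)} (hy : y 0 = 0) (z : EuclideanSpace ℝ (Fin d)) :
    |f z - f y - if 0 < z 0 then fderiv ℝ fp y (z - y) else fderiv ℝ fm y (z - y)|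
      ≤ M * ‖z - y‖ ^ 2 := by
  rw [← Real.norm_eq_abs]
  split_ifs with hz
  · rw [hagreep z hz.le, hagreep y hy.ge]
    exact norm_sub_sub_fderiv_apply_le_of_norm_iteratedFDeriv_two_le hfp hMp y z
  · rw [hagreem z (not_lt.1 hz), hagreem y hy.le]
    exact norm_sub_sub_fderiv_apply_le_of_norm_iteratedFDeriv_two_le hfm hMm y z

theorem abs_sub_sub_ite_mul_add_sum_le (hfp : ContDiff ℝ 2 fp) (hfm : ContDiff ℝ 2 fm)
    (hMp : ∀ z, ‖iteratedFDeriv ℝ 2 fp z‖ ≤ M) (hMm : ∀ z, ‖iteratedFDeriv ℝ 2 fm z‖ ≤ M)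
    (hagreep : ∀ z : EuclideanSpace ℝ (Fin d), 0 ≤ z 0 → f z = fp z)
    (hagreem : ∀ z : EuclideanSpace ℝ (Fin d), z 0 ≤ 0 → f z = fm z)
    (x : EuclideanSpace ℝ (Fin d))
    (htangent : ∀ j : Fin d, j ≠ 0 → fderiv ℝ fp (interfaceProj x) (EuclideanSpace.single j 1)
      = fderiv ℝ fm (interfaceProj x) (EuclideanSpace.single j 1))
    (z : EuclideanSpace ℝ (Fin d)) :
    |f z - f (interfaceProj x)
      - ((if 0 < z 0 then fderiv ℝ fp (interfaceProj x) (EuclideanSpace.single 0 1)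
          else fderiv ℝ fm (interfaceProj x) (EuclideanSpace.single 0 1)) * z 0
        + ∑ j ∈ Finset.univ.erase 0,
            fderiv ℝ fp (interfaceProj x) (EuclideanSpace.single j 1) * (z j - x j))|
      ≤ M * (z 0 ^ 2 + ∑ j ∈ Finset.univ.erase 0, (z j - x j) ^ 2) := by
  have hcoord : ∀ j ∈ Finset.univ.erase (0 : Fin d), (z - interfaceProj x) j = z j - x j :=
    fun j hj => by simp [interfaceProj_apply_of_ne x (Finset.ne_of_mem_erase hj)]
  have key := abs_sub_sub_ite_fderiv_le hfp hfm hMp hMm hagreep hagreem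
    (interfaceProj_apply_zero x) z
  rw [norm_sq_eq_sq_add_sum_erase, Finset.sum_congr rfl fun j hj => by rw [hcoord j hj]] at key
  have h0 : (z - interfaceProj x) 0 = z 0 := by simp
  rw [h0] at key
  convert key using 3
  split_ifs <;>
  · rw [apply_eq_mul_add_sum_erase _ (z - interfaceProj x), h0, mul_comm]
    refine congrArg _ (Finset.sum_congr rfl fun j hj => ?_)
    rw [hcoord j hj, mul_comm, htangent j (Finset.ne_of_mem_erase hj)]

theorem abs_integral_comp_sub_sub_le_of_abs_sub_ite_le
    {Ω : Type*} [MeasurableSpace Ω] {P : Measure Ω} [IsProbabilityMeasure P]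
    {g : EuclideanSpace ℝ (Fin d) → ℝ} (hg : Measurable g) {k a b M : ℝ} {c : Fin d → ℝ}
    {x : EuclideanSpace ℝ (Fin d)}
    (hlin : ∀ z : EuclideanSpace ℝ (Fin d),
      |g z - k - ((if 0 < z 0 then a else b) * z 0
        + ∑ j ∈ Finset.univ.erase 0, c j * (z j - x j))|
      ≤ M * (z 0 ^ 2 + ∑ j ∈ Finset.univ.erase 0, (z j - x j) ^ 2))
    {Z : Ω → EuclideanSpace ℝ (Fin d)} (hZ : Measurable Z) {δ : ℝ}
    (hZ0 : ∀ᵐ ω ∂P, |Z ω 0| = δ)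
    (hint : ∀ j : Fin d, j ≠ 0 → Integrable (fun ω => (Z ω j - x j) ^ 2) P) :
    |∫ ω, g (Z ω) ∂P - k
      - (δ * (P.real {ω | Z ω 0 = δ} * (a + b) - b)
        + ∑ j ∈ Finset.univ.erase 0, c j * ∫ ω, (Z ω j - x j) ∂P)|
      ≤ M * (δ ^ 2 + ∑ j ∈ Finset.univ.erase 0, ∫ ω, (Z ω j - x j) ^ 2 ∂P) := by
  have hZj (j : Fin d) : Measurable fun ω => Z ω j := by fun_prop
  have hint1 (j) (hj : j ∈ Finset.univ.erase (0 : Fin d)) :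
      Integrable (fun ω => Z ω j - x j) P :=
    ((memLp_two_iff_integrable_sq ((hZj j).sub_const _).aestronglyMeasurable).2
      (hint j (Finset.ne_of_mem_erase hj))).integrable one_le_two
  have hint2 (j) (hj : j ∈ Finset.univ.erase (0 : Fin d)) :
      Integrable (fun ω => (Z ω j - x j) ^ 2) P :=
    hint j (Finset.ne_of_mem_erase hj)
  have hsq : (fun ω => Z ω 0 ^ 2) =ᵐ[P] fun _ => δ ^ 2 := by
    filter_upwards [hZ0] with ω hω
    rw [← hω, sq_abs]
  have hite := integrable_ite_mul_of_abs_eq (hZj 0) hZ0 a b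
  have hsum := integrable_finsetSum _ fun j hj => (hint1 j hj).const_mul (c j)
  have key := abs_integral_sub_sub_le_of_abs_sub_le (W := fun ω => g (Z ω))
    (T := fun ω => (if 0 < Z ω 0 then a else b) * Z ω 0
      + ∑ j ∈ Finset.univ.erase 0, c j * (Z ω j - x j))
    (R := fun ω => Z ω 0 ^ 2 + ∑ j ∈ Finset.univ.erase 0, (Z ω j - x j) ^ 2)
    (hg.comp hZ).aestronglyMeasurable
    (hite.add hsum) (((integrable_const _).congr hsq.symm).add (integrable_finsetSum _ hint2))
    (.of_forall fun ω => hlin (Z ω))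
  simp_rw [← integral_const_mul]
  rwa [integral_add hite hsum, integral_ite_mul_of_abs_eq (hZj 0) hZ0,
    integral_finsetSum _ fun j hj => (hint1 j hj).const_mul (c j),
    integral_add ((integrable_const _).congr hsq.symm) (integrable_finsetSum _ hint2),
    integral_congr_ae hsq, integral_finsetSum _ hint2, integral_const, probReal_univ,
    one_smul] at key

end Interface

theorem gluing_condition_limit_general (d : ℕ) [NeZero d]
    (pp pm : ℝ) (hsum : pp + pm = 1)
    (α : Fin d → ℝ) (C : ℝ)
    (f fp fm : EuclideanSpace ℝ (Fin d) → ℝ)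
    (hfp : ContDiff ℝ 2 fp) (hfm : ContDiff ℝ 2 fm)
    (hfpb : ∃ M : ℝ, ∀ x, ‖fderiv ℝ fp x‖ ≤ M ∧ ‖iteratedFDeriv ℝ 2 fp x‖ ≤ M)
    (hfmb : ∃ M : ℝ, ∀ x, ‖fderiv ℝ fm x‖ ≤ M ∧ ‖iteratedFDeriv ℝ 2 fm x‖ ≤ M)
    (hagreep : ∀ x : EuclideanSpace ℝ (Fin d), 0 ≤ x 0 → f x = fp x)
    (hagreem : ∀ x : EuclideanSpace ℝ (Fin d), x 0 ≤ 0 → f x = fm x)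
    (htangent : ∀ x : EuclideanSpace ℝ (Fin d), x 0 = 0 → ∀ j : Fin d, j ≠ 0 →
      fderiv ℝ fp x (EuclideanSpace.single j 1) = fderiv ℝ fm x (EuclideanSpace.single j 1))
    (hglue : ∀ x : EuclideanSpace ℝ (Fin d), x 0 = 0 →
      pp * fderiv ℝ fp x (EuclideanSpace.single 0 1)
        - pm * fderiv ℝ fm x (EuclideanSpace.single 0 1)
        + ∑ j ∈ Finset.univ.erase (0 : Fin d),
            α j * fderiv ℝ fp x (EuclideanSpace.single j 1) = 0)
    (δ η : ℕ → ℝ) (hδpos : ∀ n, 0 < δ n) (hδ0 : Tendsto δ atTop (𝓝 0))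
    (hηδ : Tendsto (fun n => η n / δ n) atTop (𝓝 0))
    (x : ℕ → EuclideanSpace ℝ (Fin d)) (hx : ∀ n, |x n 0| ≤ η n)
    (Ωs : ℕ → Type) (mΩ : ∀ n, MeasurableSpace (Ωs n))
    (P : ∀ n, Measure (Ωs n)) (hP : ∀ n, IsProbabilityMeasure (P n))
    (Z : ∀ n, Ωs n → EuclideanSpace ℝ (Fin d)) (hZm : ∀ n, Measurable (Z n))
    (hZ1 : ∀ n, ∀ᵐ ω ∂P n, |Z n ω 0| = δ n)
    (hZp : Tendsto (fun n => ((P n) {ω | Z n ω 0 = δ n}).toReal) atTop (𝓝 pp))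
    (hint : ∀ n (j : Fin d), Integrable (fun ω => (Z n ω j - x n j) ^ 2) (P n))
    (hmean : ∀ j : Fin d, j ≠ 0 →
      Tendsto (fun n => (∫ ω, (Z n ω j - x n j) ∂P n) / δ n) atTop (𝓝 (α j)))
    (hvar : ∀ n (j : Fin d), j ≠ 0 → ∫ ω, (Z n ω j - x n j) ^ 2 ∂P n ≤ C * δ n ^ 2) :
    Tendsto (fun n => ((∫ ω, f (Z n ω) ∂P n) - f (x n)) / δ n) atTop (𝓝 0) := by
  obtain ⟨M, hMp, hMm⟩ : ∃ M : ℝ, (∀ z, ‖fderiv ℝ fp z‖ ≤ M ∧ ‖iteratedFDeriv ℝ 2 fp z‖ ≤ M) ∧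
      ∀ z, ‖fderiv ℝ fm z‖ ≤ M ∧ ‖iteratedFDeriv ℝ 2 fm z‖ ≤ M := by
    obtain ⟨Mp, hp⟩ := hfpb
    obtain ⟨Mm, hm⟩ := hfmb
    exact ⟨max Mp Mm, fun z => ⟨le_max_of_le_left (hp z).1, le_max_of_le_left (hp z).2⟩,
      fun z => ⟨le_max_of_le_right (hm z).1, le_max_of_le_right (hm z).2⟩⟩
  have hM : 0 ≤ M := (norm_nonneg _).trans (hMp 0).1
  set K : ℝ := ↑(Finset.univ.erase (0 : Fin d)).card
  refine tendsto_div_of_abs_sub_le (A := M * (1 + K * C)) (B := M) hδpos hδ0 hηδ (fun n => ?_)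
    (tendsto_firstOrder_div_of_gluing _ (fun n => (hδpos n).ne') hsum hZp
      (fun j hj => hmean j (Finset.ne_of_mem_erase hj))
      (fun n => (abs_apply_single_le _ 0).trans (hMp _).1)
      (fun n => (abs_apply_single_le _ 0).trans (hMm _).1)
      (fun n j => (abs_apply_single_le _ j).trans (hMp _).1)
      (fun n => hglue _ (interfaceProj_apply_zero (x n))))
  have := hP n
  have hstep := abs_integral_comp_sub_sub_le_of_abs_sub_ite_le
    (measurable_of_eq_on_halfSpaces hfp.continuous hfm.continuous hagreep hagreem)
    (abs_sub_sub_ite_mul_add_sum_le hfp hfm (fun z => (hMp z).2) (fun z => (hMm z).2)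
      hagreep hagreem (x n) (htangent _ (interfaceProj_apply_zero (x n))))
    (hZm n) (hZ1 n) (fun j _ => hint n j)
  have hproj := abs_interfaceProj_sub_le (hfp.differentiable two_ne_zero)
    (hfm.differentiable two_ne_zero) (fun z => (hMp z).1) (fun z => (hMm z).1) hagreep hagreem (x n)
  have hvar' : ∑ j ∈ Finset.univ.erase 0, ∫ ω, (Z n ω j - x n j) ^ 2 ∂P n ≤ K * (C * δ n ^ 2) := by
    refine (Finset.sum_le_sum fun j hj => hvar n j (Finset.ne_of_mem_erase hj)).trans_eq ?_
    rw [Finset.sum_const, nsmul_eq_mul]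
  have hquad := mul_le_mul_of_nonneg_left (add_le_add_left hvar' (δ n ^ 2)) hM
  have hlin := mul_le_mul_of_nonneg_left (hx n) hM
  rw [measureReal_def, abs_le] at hstep
  rw [abs_le] at hproj ⊢
  constructor <;> linarith [hstep.1, hstep.2, hproj.1, hproj.2]

/-- Let `f : ℝ^d → ℝ` (d ≥ 2) be continuous and bounded, agreeing with
`C²` functions `f₊`, `f₋` (with bounded first and second derivatives) on the closed
half-spaces `{x₁ ≥ 0}` and `{x₁ ≤ 0}`, with matching tangential derivatives on the interface
and satisfying the gluing condition
`p₊ ∂₁f|₊ − p₋ ∂₁f|₋ + Σ_{j≥2} α_j ∂_j f = 0` on `{x₁ = 0}`.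
If `δ_n → 0`, `η_n/δ_n → 0`, the starting points `x_n` satisfy `|x_{n,1}| ≤ η_n`, and the
random vectors `Z_n` satisfy `|Z_{n,1}| = δ_n` a.s., `P(Z_{n,1} = δ_n) → p₊`,
`E[Z_{n,j} − x_{n,j}] = α_j δ_n + o(δ_n)` and `E[(Z_{n,j} − x_{n,j})²] ≤ C δ_n²` for `j ≥ 2`,
then `(E[f(Z_n)] − f(x_n))/δ_n → 0`. -/
theorem gluing_condition_limit (d : ℕ) [NeZero d] (hd : 2 ≤ d)
    (pp pm : ℝ) (hpp : 0 ≤ pp) (hpm : 0 ≤ pm) (hsum : pp + pm = 1)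
    (α : Fin d → ℝ) (C : ℝ) (hC : 0 < C)
    (f fp fm : EuclideanSpace ℝ (Fin d) → ℝ)
    (hfc : Continuous f) (hfb : ∃ M : ℝ, ∀ x, |f x| ≤ M)
    (hfp : ContDiff ℝ 2 fp) (hfm : ContDiff ℝ 2 fm)
    (hfpb : ∃ M : ℝ, ∀ x, ‖fderiv ℝ fp x‖ ≤ M ∧ ‖iteratedFDeriv ℝ 2 fp x‖ ≤ M)
    (hfmb : ∃ M : ℝ, ∀ x, ‖fderiv ℝ fm x‖ ≤ M ∧ ‖iteratedFDeriv ℝ 2 fm x‖ ≤ M)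
    (hagreep : ∀ x : EuclideanSpace ℝ (Fin d), 0 ≤ x 0 → f x = fp x)
    (hagreem : ∀ x : EuclideanSpace ℝ (Fin d), x 0 ≤ 0 → f x = fm x)
    (htangent : ∀ x : EuclideanSpace ℝ (Fin d), x 0 = 0 → ∀ j : Fin d, j ≠ 0 →
      fderiv ℝ fp x (EuclideanSpace.single j 1) = fderiv ℝ fm x (EuclideanSpace.single j 1))
    (hglue : ∀ x : EuclideanSpace ℝ (Fin d), x 0 = 0 →
      pp * fderiv ℝ fp x (EuclideanSpace.single 0 1)
        - pm * fderiv ℝ fm x (EuclideanSpace.single 0 1)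
        + ∑ j ∈ Finset.univ.erase (0 : Fin d),
            α j * fderiv ℝ fp x (EuclideanSpace.single j 1) = 0)
    (δ η : ℕ → ℝ) (hδpos : ∀ n, 0 < δ n) (hδ0 : Tendsto δ atTop (𝓝 0))
    (hηnn : ∀ n, 0 ≤ η n) (hηδ : Tendsto (fun n => η n / δ n) atTop (𝓝 0))
    (x : ℕ → EuclideanSpace ℝ (Fin d)) (hx : ∀ n, |x n 0| ≤ η n)
    (Ωs : ℕ → Type) (mΩ : ∀ n, MeasurableSpace (Ωs n))
    (P : ∀ n, Measure (Ωs n)) (hP : ∀ n, IsProbabilityMeasure (P n))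
    (Z : ∀ n, Ωs n → EuclideanSpace ℝ (Fin d)) (hZm : ∀ n, Measurable (Z n))
    (hZ1 : ∀ n, ∀ᵐ ω ∂P n, |Z n ω 0| = δ n)
    (hZp : Tendsto (fun n => ((P n) {ω | Z n ω 0 = δ n}).toReal) atTop (𝓝 pp))
    (hint : ∀ n (j : Fin d), Integrable (fun ω => (Z n ω j - x n j) ^ 2) (P n))
    (hmean : ∀ j : Fin d, j ≠ 0 →
      Tendsto (fun n => (∫ ω, (Z n ω j - x n j) ∂P n) / δ n) atTop (𝓝 (α j)))
    (hvar : ∀ n (j : Fin d), j ≠ 0 → ∫ ω, (Z n ω j - x n j) ^ 2 ∂P n ≤ C * δ n ^ 2) :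
    Tendsto (fun n => ((∫ ω, f (Z n ω) ∂P n) - f (x n)) / δ n) atTop (𝓝 0) :=
  gluing_condition_limit_general d pp pm hsum α C f fp fm hfp hfm hfpb hfmb hagreep hagreem htangent
    hglue δ η hδpos hδ0 hηδ x hx Ωs mΩ P hP Z hZm hZ1 hZp hint hmean hvar
end

section
/- Let b : ℝ^d → ℝ^d be smooth and ℤ^d-periodic, and write L φ = (1/2)Δφ + b·∇φ and, for ε > 0, L^ε φ(x) = (1/2)Δφ(x) + ε^{−1} b(x/ε)·∇φ(x). Suppose g, h : ℝ^d → ℝ are smooth ℤ^d-periodic functions and K ∈ ℝ are such that L g = b_1 (the first component of b) and L h = F − K, where F(x) = 2 b_1(x) g(x) + 2 ∂_1 g(x). Then for all constants C_1, C_2 ∈ ℝ and every ε > 0, the function g^ε(x) = C_2 − C_1 x_1(1 + x_1) + ε C_1 (1 + 2x_1) g(x/ε) − ε² C_1 h(x/ε) satisfies L^ε g^ε(x) = C_1 (K − 1) for every x ∈ ℝ^d. -/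
open Set
open scoped BigOperators

noncomputable section

/-- The Laplacian `Δφ(x) = Σ_i ∂²_{ii} φ(x)` of `φ : ℝ^d → ℝ`. -/
def lap {d : ℕ} (φ : EuclideanSpace ℝ (Fin d) → ℝ) (x : EuclideanSpace ℝ (Fin d)) : ℝ :=
  ∑ i : Fin d,
    iteratedFDeriv ℝ 2 φ x ![EuclideanSpace.single i 1, EuclideanSpace.single i 1]

/-- The partial derivative `∂_i φ(x)` of `φ : ℝ^d → ℝ`. -/
def pder {d : ℕ} (φ : EuclideanSpace ℝ (Fin d) → ℝ) (i : Fin d)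
    (x : EuclideanSpace ℝ (Fin d)) : ℝ :=
  fderiv ℝ φ x (EuclideanSpace.single i 1)

/-- The generator `L φ = (1/2)Δφ + b·∇φ`. -/
def Lgen {d : ℕ} (b : EuclideanSpace ℝ (Fin d) → EuclideanSpace ℝ (Fin d))
    (φ : EuclideanSpace ℝ (Fin d) → ℝ) (x : EuclideanSpace ℝ (Fin d)) : ℝ :=
  (1 / 2) * lap φ x + ∑ i : Fin d, b x i * pder φ i x

/-- The rescaled generator `L^ε φ(x) = (1/2)Δφ(x) + ε⁻¹ b(x/ε)·∇φ(x)`. -/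
def Leps {d : ℕ} (ε : ℝ) (b : EuclideanSpace ℝ (Fin d) → EuclideanSpace ℝ (Fin d))
    (φ : EuclideanSpace ℝ (Fin d) → ℝ) (x : EuclideanSpace ℝ (Fin d)) : ℝ :=
  (1 / 2) * lap φ x + ∑ i : Fin d, ε⁻¹ * b (ε⁻¹ • x) i * pder φ i x

/-- The corrected test function
`g^ε(x) = C₂ − C₁ x₁(1 + x₁) + ε C₁ (1 + 2x₁) g(x/ε) − ε² C₁ h(x/ε)`. -/
def geps {d : ℕ} [NeZero d] (C₁ C₂ ε : ℝ)
    (g h : EuclideanSpace ℝ (Fin d) → ℝ) : EuclideanSpace ℝ (Fin d) → ℝ :=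
  fun x => C₂ - C₁ * x 0 * (1 + x 0) + ε * C₁ * (1 + 2 * x 0) * g (ε⁻¹ • x)
    - ε ^ 2 * C₁ * h (ε⁻¹ • x)

section Helpers
variable {d : ℕ}
local notation "E" => EuclideanSpace ℝ (Fin d)

set_option linter.unusedSectionVars false

lemma pder_contDiff {φ : E → ℝ} (hφ : ContDiff ℝ (⊤ : ℕ∞) φ) (i : Fin d) :
    ContDiff ℝ (⊤ : ℕ∞) (pder φ i) :=
  (hφ.fderiv_right (by simp)).clm_apply contDiff_const

lemma lap_eq_sum {φ : E → ℝ} (hφ : ContDiff ℝ (⊤ : ℕ∞) φ) (x : E) :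
    lap φ x = ∑ i : Fin d, pder (pder φ i) i x := by
  unfold lap
  refine Finset.sum_congr rfl fun i _ => ?_
  rw [iteratedFDeriv_two_apply]
  have hc : DifferentiableAt ℝ (fderiv ℝ φ) x :=
    ((hφ.fderiv_right (m := 1) (WithTop.coe_le_coe.mpr le_top)).differentiable (by simp)) x
  rw [show (pder (pder φ i) i x) = fderiv ℝ
      (fun y => (fderiv ℝ φ y) (EuclideanSpace.single i 1)) x (EuclideanSpace.single i 1)
      from rfl,
    fderiv_clm_apply hc (differentiableAt_const _)]
  simp

variable [NeZero d]

lemma coord_hasFDerivAt (x : E) :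
    HasFDerivAt (fun x : E => x 0) (EuclideanSpace.proj (0 : Fin d) : E →L[ℝ] ℝ) x := by
  have hco : ⇑(EuclideanSpace.proj (0 : Fin d) : E →L[ℝ] ℝ) = fun x : E => x 0 := by
    funext y; simp
  exact hco ▸ (EuclideanSpace.proj (0 : Fin d) : E →L[ℝ] ℝ).hasFDerivAt

lemma comp_smul_hasFDerivAt {φ : E → ℝ} (hφ : Differentiable ℝ φ) (c : ℝ) (x : E) :
    HasFDerivAt (fun x : E => φ (c • x))
      ((fderiv ℝ φ (c • x)).comp (c • ContinuousLinearMap.id ℝ (EuclideanSpace ℝ (Fin d)))) x := by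
  have hs : HasFDerivAt (fun x : E => c • x)
      (c • ContinuousLinearMap.id ℝ (EuclideanSpace ℝ (Fin d))) x := by
    simpa [Pi.smul_def] using ((c • ContinuousLinearMap.id ℝ (EuclideanSpace ℝ (Fin d))).hasFDerivAt (x := x))
  exact ((hφ (c • x)).hasFDerivAt).comp x hs

lemma geps_contDiff (C₁ C₂ ε : ℝ) {g h : E → ℝ} (hg : ContDiff ℝ (⊤ : ℕ∞) g)
    (hh : ContDiff ℝ (⊤ : ℕ∞) h) : ContDiff ℝ (⊤ : ℕ∞) (geps C₁ C₂ ε g h) := by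
  have hco : ContDiff ℝ (⊤ : ℕ∞) (fun x : E => x 0) := by
    have hco' : ⇑(EuclideanSpace.proj (0 : Fin d) : E →L[ℝ] ℝ) = fun x : E => x 0 := by
      funext y; simp
    exact hco' ▸ (EuclideanSpace.proj (0 : Fin d) : E →L[ℝ] ℝ).contDiff
  have hs : ContDiff ℝ (⊤ : ℕ∞) (fun x : E => ε⁻¹ • x) := contDiff_id.const_smul ε⁻¹
  exact (((contDiff_const.sub ((contDiff_const.mul hco).mul (contDiff_const.add hco))).add
    ((contDiff_const.mul (contDiff_const.add (contDiff_const.mul hco))).mul (hg.comp hs))).sub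
    (contDiff_const.mul (hh.comp hs)))

lemma pder_geps (C₁ C₂ ε : ℝ) {g h : E → ℝ} (hg : Differentiable ℝ g)
    (hh : Differentiable ℝ h) (i : Fin d) :
    pder (geps C₁ C₂ ε g h) i = fun x =>
      (EuclideanSpace.single i (1:ℝ) 0) * (-(C₁ * (1 + 2 * x 0)) + 2 * ε * C₁ * g (ε⁻¹ • x))
      + ε * C₁ * (1 + 2 * x 0) * (ε⁻¹ * pder g i (ε⁻¹ • x))
      - ε ^ 2 * C₁ * (ε⁻¹ * pder h i (ε⁻¹ • x)) := by
  funext x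
  have h1 := coord_hasFDerivAt (d := d) x
  have hG := comp_smul_hasFDerivAt hg ε⁻¹ x
  have hH := comp_smul_hasFDerivAt hh ε⁻¹ x
  have hmain : HasFDerivAt (geps C₁ C₂ ε g h) _ x :=
    (((hasFDerivAt_const C₂ x).sub ((h1.const_mul C₁).mul (h1.const_add 1))).add
      ((((h1.const_mul 2).const_add 1).const_mul (ε * C₁)).mul hG)).sub (hH.const_mul (ε ^ 2 * C₁))
  rw [pder, hmain.fderiv]
  simp only [ContinuousLinearMap.add_apply, ContinuousLinearMap.sub_apply,
    ContinuousLinearMap.zero_apply, ContinuousLinearMap.smul_apply,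
    ContinuousLinearMap.coe_comp', Function.comp_apply, ContinuousLinearMap.coe_smul',
    Pi.smul_apply, ContinuousLinearMap.id_apply, map_smul, smul_eq_mul, pder]
  have hproj : (EuclideanSpace.proj (0 : Fin d) : E →L[ℝ] ℝ) (EuclideanSpace.single i 1)
      = EuclideanSpace.single i (1:ℝ) 0 := rfl
  rw [hproj]
  ring

lemma pder2_geps (C₁ C₂ ε : ℝ) {g h : E → ℝ} (hg : ContDiff ℝ (⊤ : ℕ∞) g)
    (hh : ContDiff ℝ (⊤ : ℕ∞) h) (i : Fin d) (x : E) :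
    pder (pder (geps C₁ C₂ ε g h) i) i x =
      (EuclideanSpace.single i (1:ℝ) 0) * (-(C₁ * (2 * EuclideanSpace.single i (1:ℝ) 0))
        + 2 * ε * C₁ * (ε⁻¹ * pder g i (ε⁻¹ • x)))
      + ε * C₁ * (2 * EuclideanSpace.single i (1:ℝ) 0) * (ε⁻¹ * pder g i (ε⁻¹ • x))
      + ε * C₁ * (1 + 2 * x 0) * (ε⁻¹ * (ε⁻¹ * pder (pder g i) i (ε⁻¹ • x)))
      - ε ^ 2 * C₁ * (ε⁻¹ * (ε⁻¹ * pder (pder h i) i (ε⁻¹ • x))) := by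
  rw [pder_geps C₁ C₂ ε (hg.differentiable (by simp)) (hh.differentiable (by simp)) i]
  have h1 := coord_hasFDerivAt (d := d) x
  have hG := comp_smul_hasFDerivAt (hg.differentiable (by simp)) ε⁻¹ x
  have hG' := comp_smul_hasFDerivAt ((pder_contDiff hg i).differentiable (by simp)) ε⁻¹ x
  have hH' := comp_smul_hasFDerivAt ((pder_contDiff hh i).differentiable (by simp)) ε⁻¹ x
  have hmain : HasFDerivAt (fun x : E =>
      (EuclideanSpace.single i (1:ℝ) 0) * (-(C₁ * (1 + 2 * x 0)) + 2 * ε * C₁ * g (ε⁻¹ • x))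
      + ε * C₁ * (1 + 2 * x 0) * (ε⁻¹ * pder g i (ε⁻¹ • x))
      - ε ^ 2 * C₁ * (ε⁻¹ * pder h i (ε⁻¹ • x))) _ x :=
    (((((((h1.const_mul 2).const_add 1).const_mul C₁).neg).add
        (hG.const_mul (2 * ε * C₁))).const_mul (EuclideanSpace.single i (1:ℝ) 0)).add
      ((((h1.const_mul 2).const_add 1).const_mul (ε * C₁)).mul (hG'.const_mul ε⁻¹))).sub
      ((hH'.const_mul ε⁻¹).const_mul (ε ^ 2 * C₁))
  rw [pder, hmain.fderiv]
  simp only [ContinuousLinearMap.add_apply, ContinuousLinearMap.sub_apply,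
    ContinuousLinearMap.neg_apply, ContinuousLinearMap.zero_apply,
    ContinuousLinearMap.smul_apply, ContinuousLinearMap.coe_comp', Function.comp_apply,
    ContinuousLinearMap.coe_smul', Pi.smul_apply, ContinuousLinearMap.id_apply, map_smul,
    smul_eq_mul, pder]
  have hproj : (EuclideanSpace.proj (0 : Fin d) : E →L[ℝ] ℝ) (EuclideanSpace.single i 1)
      = EuclideanSpace.single i (1:ℝ) 0 := rfl
  rw [hproj]
  ring

end Helpers

/-- If `b` is smooth and `ℤ^d`-periodic, `L g = b₁` and `L h = F − K` where
`F = 2 b₁ g + 2 ∂₁ g`, then for all `C₁, C₂` and all `ε > 0` the function `g^ε` satisfies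
`L^ε g^ε = C₁ (K − 1)` identically. -/
theorem multiscale_expansion_identity {d : ℕ} [NeZero d]
    (b : EuclideanSpace ℝ (Fin d) → EuclideanSpace ℝ (Fin d))
    (g h : EuclideanSpace ℝ (Fin d) → ℝ) (K : ℝ)
    (hb : ContDiff ℝ (⊤ : ℕ∞) b)
    (hbper : ∀ (x : EuclideanSpace ℝ (Fin d)) (i : Fin d),
      b (x + EuclideanSpace.single i 1) = b x)
    (hg : ContDiff ℝ (⊤ : ℕ∞) g)
    (hgper : ∀ (x : EuclideanSpace ℝ (Fin d)) (i : Fin d),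
      g (x + EuclideanSpace.single i 1) = g x)
    (hh : ContDiff ℝ (⊤ : ℕ∞) h)
    (hhper : ∀ (x : EuclideanSpace ℝ (Fin d)) (i : Fin d),
      h (x + EuclideanSpace.single i 1) = h x)
    (hLg : ∀ x, Lgen b g x = b x 0)
    (hLh : ∀ x, Lgen b h x = (2 * b x 0 * g x + 2 * pder g 0 x) - K) :
    ∀ (C₁ C₂ ε : ℝ), 0 < ε → ∀ x, Leps ε b (geps C₁ C₂ ε g h) x = C₁ * (K - 1) := by
  intro C₁ C₂ ε hε x
  have hε0 : ε ≠ 0 := hε.ne'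
  set y : EuclideanSpace ℝ (Fin d) := ε⁻¹ • x with hy
  have Hg := hLg y
  have Hh := hLh y
  simp only [Lgen] at Hg Hh
  have hSg : (∑ i : Fin d, b y i * pder g i y) = b y 0 - (1/2) * lap g y := by linarith
  have hSh : (∑ i : Fin d, b y i * pder h i y)
      = (2 * b y 0 * g y + 2 * pder g 0 y) - K - (1/2) * lap h y := by linarith
  unfold Leps
  rw [lap_eq_sum (geps_contDiff C₁ C₂ ε hg hh) x]
  have hsum1 : (∑ i : Fin d, pder (pder (geps C₁ C₂ ε g h) i) i x)
      = -(2*C₁) + 4*ε*C₁*(ε⁻¹ * pder g 0 y)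
        + ε*C₁*(1+2*x 0)*(ε⁻¹*(ε⁻¹ * lap g y))
        - ε^2*C₁*(ε⁻¹*(ε⁻¹ * lap h y)) := by
    simp only [pder2_geps C₁ C₂ ε hg hh]
    conv_rhs => rw [lap_eq_sum hg y, lap_eq_sum hh y]
    simp only [EuclideanSpace.single_apply, Finset.mul_sum, mul_ite, ite_mul, mul_zero,
      zero_mul, mul_one, one_mul, Finset.sum_add_distrib, Finset.sum_sub_distrib,
      Finset.sum_ite_eq, Finset.mem_univ, if_true]
    ring
  rw [hsum1]
  have hsum2 : (∑ i : Fin d, ε⁻¹ * b (ε⁻¹ • x) i * pder (geps C₁ C₂ ε g h) i x)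
      = ε⁻¹ * b y 0 * (-(C₁ * (1 + 2 * x 0)) + 2 * ε * C₁ * g y)
        + ε * C₁ * (1 + 2 * x 0) * (ε⁻¹ * ε⁻¹ * (∑ i : Fin d, b y i * pder g i y))
        - ε ^ 2 * C₁ * (ε⁻¹ * ε⁻¹ * (∑ i : Fin d, b y i * pder h i y)) := by
    simp only [pder_geps C₁ C₂ ε (hg.differentiable (by simp)) (hh.differentiable (by simp)), ← hy]
    trans (∑ i : Fin d,
      ((if (0 : Fin d) = i then ε⁻¹ * b y i * (-(C₁ * (1 + 2 * x 0)) + 2 * ε * C₁ * g y) else 0)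
        + ε * C₁ * (1 + 2 * x 0) * (ε⁻¹ * ε⁻¹) * (b y i * pder g i y)
        - ε ^ 2 * C₁ * (ε⁻¹ * ε⁻¹) * (b y i * pder h i y)))
    · refine Finset.sum_congr rfl fun i _ => ?_
      simp only [EuclideanSpace.single_apply]
      split <;> ring
    · simp only [Finset.sum_add_distrib, Finset.sum_sub_distrib, Finset.sum_ite_eq,
        Finset.mem_univ, if_true, ← Finset.mul_sum]
      ring
  rw [hsum2, hSg, hSh]
  field_simp
  ring

end
end

section
/- Let b : ℝ^d → ℝ^d be smooth and ℤ^d-periodic, let L φ = (1/2)Δφ + b·∇φ, and let μ be a Borel probability measure on the torus 𝕋^d = ℝ^d/ℤ^d such that ∫ L φ dμ = 0 for every smooth ℤ^d-periodic function φ. If g : ℝ^d → ℝ is smooth, ℤ^d-periodic, and satisfies L g = b_1 (the first component of b), then ∫ (2 b_1 g + 2 ∂_1 g) dμ − 1 = − ∫ |e_1 − ∇g|² dμ, where e_1 is the first standard basis vector of ℝ^d. -/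
open MeasureTheory Set
open scoped BigOperators

noncomputable section

/-- The torus `𝕋^d = ℝ^d/ℤ^d`. -/
abbrev Torus (d : ℕ) := Fin d → AddCircle (1 : ℝ)

/-- The canonical projection `ℝ^d → 𝕋^d`. -/
def torusProj (d : ℕ) : EuclideanSpace ℝ (Fin d) → Torus d := fun x i => (x i : AddCircle (1 : ℝ))

lemma aux_sq_deriv {d : ℕ} (g : EuclideanSpace ℝ (Fin d) → ℝ) (hg : ContDiff ℝ (⊤ : ℕ∞) g)
    (x v : EuclideanSpace ℝ (Fin d)) :
    iteratedFDeriv ℝ 2 (fun y => g y * g y) x ![v, v]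
      = 2 * g x * iteratedFDeriv ℝ 2 g x ![v, v] + 2 * (fderiv ℝ g x v)^2 := by
  have hg1 : Differentiable ℝ g := hg.differentiable (by simp)
  have hgd : ContDiff ℝ (⊤ : ℕ∞) (fderiv ℝ g) := hg.fderiv_right (by simp)
  have hD : (fun y => fderiv ℝ (fun z => g z * g z) y)
      = fun y => (2 * g y) • fderiv ℝ g y := by
    funext y
    rw [fderiv_fun_mul (hg1 y) (hg1 y), two_mul, add_smul]
  have h2 : fderiv ℝ (fderiv ℝ (fun z => g z * g z)) x
      = (2 * g x) • fderiv ℝ (fderiv ℝ g) x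
        + (fderiv ℝ (fun y => 2 * g y) x).smulRight (fderiv ℝ g x) := by
    conv_lhs => rw [show fderiv ℝ (fun z => g z * g z) = _ from hD]
    exact fderiv_smul ((hg1 x).const_mul 2) (hgd.differentiable (by simp) x)
  rw [iteratedFDeriv_two_apply, iteratedFDeriv_two_apply, h2]
  simp [fderiv_const_mul (hg1 x) 2, Matrix.cons_val_zero, Matrix.cons_val_one]
  ring

lemma aux_Lgen_sq {d : ℕ} (b : EuclideanSpace ℝ (Fin d) → EuclideanSpace ℝ (Fin d))
    (g : EuclideanSpace ℝ (Fin d) → ℝ) (hg : ContDiff ℝ (⊤ : ℕ∞) g)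
    (x : EuclideanSpace ℝ (Fin d)) :
    Lgen b (fun y => g y * g y) x = 2 * g x * Lgen b g x + ∑ i : Fin d, (pder g i x)^2 := by
  have hg1 : Differentiable ℝ g := hg.differentiable (by simp)
  have hp : ∀ i : Fin d, pder (fun y => g y * g y) i x = 2 * g x * pder g i x := by
    intro i
    simp only [pder]
    rw [fderiv_fun_mul (hg1 x) (hg1 x)]
    simp only [ContinuousLinearMap.add_apply, ContinuousLinearMap.smul_apply, smul_eq_mul]
    ring
  simp only [Lgen, lap]
  rw [Finset.sum_congr rfl (fun i _ => aux_sq_deriv g hg x (EuclideanSpace.single i 1)),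
    Finset.sum_congr rfl (fun (i : Fin d) _ => congrArg (b x i * ·) (hp i))]
  rw [Finset.sum_add_distrib, ← Finset.mul_sum, ← Finset.mul_sum]
  have h3 : ∑ i : Fin d, b x i * (2 * g x * pder g i x)
      = 2 * g x * ∑ i : Fin d, b x i * pder g i x := by
    rw [Finset.mul_sum]; exact Finset.sum_congr rfl fun i _ => by ring
  rw [h3]; simp only [pder]; ring


/-- If `μ` is an infinitesimally invariant probability measure on the torus
for `L = (1/2)Δ + b·∇` (with `b` smooth `ℤ^d`-periodic) and `g` is smooth `ℤ^d`-periodic with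
`L g = b₁`, then `∫ (2 b₁ g + 2 ∂₁ g) dμ − 1 = − ∫ |e₁ − ∇g|² dμ`. Periodic functions are
identified with functions on the torus via `torusProj`. -/
theorem invariant_measure_first_coordinate_identity {d : ℕ} [NeZero d]
    (b : EuclideanSpace ℝ (Fin d) → EuclideanSpace ℝ (Fin d))
    (hb : ContDiff ℝ (⊤ : ℕ∞) b)
    (hbper : ∀ (x : EuclideanSpace ℝ (Fin d)) (i : Fin d),
      b (x + EuclideanSpace.single i 1) = b x)
    (μ : Measure (Torus d)) [IsProbabilityMeasure μ]
    (hinv : ∀ φ : EuclideanSpace ℝ (Fin d) → ℝ, ContDiff ℝ (⊤ : ℕ∞) φ →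
      (∀ (x : EuclideanSpace ℝ (Fin d)) (i : Fin d), φ (x + EuclideanSpace.single i 1) = φ x) →
      ∀ φbar : Torus d → ℝ, (∀ x, φbar (torusProj d x) = Lgen b φ x) →
      ∫ y, φbar y ∂μ = 0)
    (g : EuclideanSpace ℝ (Fin d) → ℝ) (hg : ContDiff ℝ (⊤ : ℕ∞) g)
    (hgper : ∀ (x : EuclideanSpace ℝ (Fin d)) (i : Fin d),
      g (x + EuclideanSpace.single i 1) = g x)
    (hLg : ∀ x, Lgen b g x = b x 0) :
    ∀ ψ₁ ψ₂ : Torus d → ℝ,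
      (∀ x, ψ₁ (torusProj d x) = 2 * b x 0 * g x + 2 * pder g 0 x) →
      (∀ x, ψ₂ (torusProj d x) =
        ∑ i : Fin d, ((if i = 0 then (1 : ℝ) else 0) - pder g i x) ^ 2) →
      (∫ y, ψ₁ y ∂μ) - 1 = -∫ y, ψ₂ y ∂μ := by
  intro ψ₁ ψ₂ hψ₁ hψ₂
  have hπ : IsOpenQuotientMap (torusProj d) :=
    (IsOpenQuotientMap.piMap (fun i => QuotientAddGroup.isOpenQuotientMap_mk)).comp
      (PiLp.continuousLinearEquiv 2 ℝ (fun _ : Fin d => ℝ)).toHomeomorph.isOpenQuotientMap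
  -- key identity on torus
  have hkey : ∀ x, ψ₁ (torusProj d x) + ψ₂ (torusProj d x) - 1
      = Lgen b (fun y => g y * g y) x := by
    intro x
    rw [hψ₁, hψ₂, aux_Lgen_sq b g hg x, hLg]
    have hexp : ∑ i : Fin d, ((if i = 0 then (1 : ℝ) else 0) - pder g i x) ^ 2
        = (∑ i : Fin d, (if i = 0 then (1:ℝ) else 0))
          - 2 * pder g 0 x + ∑ i : Fin d, (pder g i x)^2 := by
      rw [Finset.sum_congr rfl (fun (i : Fin d) _ => by by_cases h : i = 0 <;> simp [h] <;> ring :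
        ∀ i ∈ Finset.univ, ((if i = 0 then (1 : ℝ) else 0) - pder g i x) ^ 2
          = ((if i = 0 then (1:ℝ) else 0) - 2 * ((if i = 0 then (1:ℝ) else 0) * pder g i x))
            + (pder g i x)^2)]
      rw [Finset.sum_add_distrib, Finset.sum_sub_distrib, ← Finset.mul_sum]
      congr 2
      simp [Finset.sum_ite_eq']
    rw [hexp]
    simp
    ring
  -- invariance applied to g²
  have h0 : ∫ y, (ψ₁ y + ψ₂ y - 1) ∂μ = 0 := by
    refine hinv (fun y => g y * g y) (hg.mul hg) (fun x i => by rw [hgper]) _ hkey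
  -- integrability
  have hcont : ∀ (ψ : Torus d → ℝ), Continuous (ψ ∘ torusProj d) → Integrable ψ μ := by
    intro ψ h
    have hc : Continuous ψ := hπ.continuous_comp_iff.mp h
    exact hc.integrable_of_hasCompactSupport (isClosed_tsupport ψ).isCompact
  have hcg : Continuous g := hg.continuous
  have hcp : ∀ i, Continuous (fun x => pder g i x) := by
    intro i
    have := (hg.fderiv_right (m := (⊤ : ℕ∞)) (by simp)).continuous
    exact (ContinuousLinearMap.apply ℝ ℝ (EuclideanSpace.single i 1)).continuous.comp this
  have hi1 : Integrable ψ₁ μ := by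
    refine hcont ψ₁ ?_
    have : (ψ₁ ∘ torusProj d) = fun x => 2 * b x 0 * g x + 2 * pder g 0 x := funext hψ₁
    rw [this]
    exact (((continuous_const.mul ((continuous_apply (0:Fin d)).comp ((PiLp.continuous_ofLp 2 _).comp hb.continuous))).mul hcg).add
      (continuous_const.mul (hcp 0)))
  have hi2 : Integrable ψ₂ μ := by
    refine hcont ψ₂ ?_
    have : (ψ₂ ∘ torusProj d) = fun x =>
        ∑ i : Fin d, ((if i = 0 then (1 : ℝ) else 0) - pder g i x) ^ 2 := funext hψ₂
    rw [this]
    exact continuous_finset_sum _ (fun i _ => (continuous_const.sub (hcp i)).pow 2)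
  have hsplit : ∫ y, (ψ₁ y + ψ₂ y - 1) ∂μ
      = (∫ y, ψ₁ y ∂μ) + (∫ y, ψ₂ y ∂μ) - 1 := by
    rw [integral_sub (show Integrable (fun y => ψ₁ y + ψ₂ y) μ from hi1.add hi2)
      (integrable_const 1), integral_add hi1 hi2, integral_const]
    simp
  rw [hsplit] at h0
  linarith


end
end

section
/- Let b_+ : ℝ^d → ℝ^d be smooth and ℤ^d-periodic, and let g : ℝ^d → ℝ be smooth and ℤ^d-periodic with (1/2)Δg + b_+·∇g = b_{+,1} (the first component of b_+). Fix η ≥ 0 and set K = η + 1 + 3 sup_{x∈ℝ^d}|g(x)|. Then for every real k > η and every bounded function f on the closed strip S̄ = {x ∈ ℝ^d : η ≤ x_1 ≤ k} that is continuous on S̄, twice continuously differentiable in the interior, periodic in the variables x_2, …, x_d (f(x + e_j) = f(x) for j = 2, …, d), and satisfies (1/2)Δf + b_+·∇f = 0 in the interior of S̄, f(x) = 1 whenever x_1 = η and f(x) = 0 whenever x_1 = k, one has 1 − (x_1 + K)/k ≤ f(x) ≤ 1 − (x_1 − K)/k for all x ∈ S̄. -/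
open Set
open scoped BigOperators

noncomputable section

section Aux
set_option linter.unusedSectionVars false

variable {d : ℕ}

local notation "E" => EuclideanSpace ℝ (Fin d)

/-! ### Calculus helper lemmas -/

lemma aux_hasDerivAt_line (φ : E → ℝ) (x v : E) (t₀ : ℝ)
    (h : DifferentiableAt ℝ φ (x + t₀ • v)) :
    HasDerivAt (fun t : ℝ => φ (x + t • v)) (fderiv ℝ φ (x + t₀ • v) v) t₀ := by
  have hline : HasDerivAt (fun t : ℝ => x + t • v) v t₀ := by
    simpa using ((hasDerivAt_id t₀).smul_const v).const_add x
  exact h.hasFDerivAt.comp_hasDerivAt t₀ hline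

lemma aux_second_line (φ : E → ℝ) (x v : E) (h : ContDiffAt ℝ 2 φ x) :
    deriv (deriv (fun t : ℝ => φ (x + t • v))) 0 = fderiv ℝ (fderiv ℝ φ) x v v := by
  have hev : ∀ᶠ y in nhds x, DifferentiableAt ℝ φ y :=
    (h.eventually (by norm_num)).mono fun y hy => hy.differentiableAt (by norm_num)
  have hcont : Continuous fun t : ℝ => x + t • v := by continuity
  have htend : Filter.Tendsto (fun t : ℝ => x + t • v) (nhds 0) (nhds x) := by
    simpa using hcont.tendsto 0
  have hev2 : ∀ᶠ t in nhds (0:ℝ), DifferentiableAt ℝ φ (x + t • v) := htend.eventually hev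
  have hder_eq : ∀ᶠ t in nhds (0:ℝ),
      deriv (fun s : ℝ => φ (x + s • v)) t = fderiv ℝ φ (x + t • v) v :=
    hev2.mono fun t ht => (aux_hasDerivAt_line φ x v t ht).deriv
  rw [Filter.EventuallyEq.deriv_eq hder_eq]
  have hA : DifferentiableAt ℝ (fderiv ℝ φ) x :=
    (h.fderiv_right (m := 1) (by norm_num)).differentiableAt (by norm_num)
  have hline : HasDerivAt (fun t : ℝ => x + t • v) v (0:ℝ) := by
    simpa using ((hasDerivAt_id (0:ℝ)).smul_const v).const_add x
  have hx0 : x + (0:ℝ) • v = x := by simp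
  rw [← hx0] at hA
  have h1 : HasDerivAt (fun t : ℝ => fderiv ℝ φ (x + t • v)) (fderiv ℝ (fderiv ℝ φ) x v) 0 := by
    have := hA.hasFDerivAt.comp_hasDerivAt (0:ℝ) hline
    rw [hx0] at this
    exact this
  have h2 : HasDerivAt (fun t : ℝ => fderiv ℝ φ (x + t • v) v)
      (fderiv ℝ (fderiv ℝ φ) x v v) 0 :=
    (ContinuousLinearMap.apply ℝ ℝ v).hasFDerivAt.comp_hasDerivAt 0 h1
  exact h2.deriv

lemma aux_itfd_two (φ : E → ℝ) (x v : E) :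
    iteratedFDeriv ℝ 2 φ x ![v, v] = fderiv ℝ (fderiv ℝ φ) x v v := by
  rw [iteratedFDeriv_two_apply]; simp

lemma aux_fderiv2_add (f q : E → ℝ) (x : E) (hf : ContDiffAt ℝ 2 f x) (hq : ContDiffAt ℝ 2 q x) :
    fderiv ℝ (fderiv ℝ (fun y => f y + q y)) x
      = fderiv ℝ (fderiv ℝ f) x + fderiv ℝ (fderiv ℝ q) x := by
  have hevf : ∀ᶠ y in nhds x, DifferentiableAt ℝ f y :=
    (hf.eventually (by norm_num)).mono fun y hy => hy.differentiableAt (by norm_num)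
  have hevq : ∀ᶠ y in nhds x, DifferentiableAt ℝ q y :=
    (hq.eventually (by norm_num)).mono fun y hy => hy.differentiableAt (by norm_num)
  have hev : ∀ᶠ y in nhds x, fderiv ℝ (fun y => f y + q y) y = fderiv ℝ f y + fderiv ℝ q y := by
    filter_upwards [hevf, hevq] with y h1 h2
    exact fderiv_add h1 h2
  rw [Filter.EventuallyEq.fderiv_eq hev]
  exact fderiv_add ((hf.fderiv_right (m := 1) (by norm_num)).differentiableAt (by norm_num))
    ((hq.fderiv_right (m := 1) (by norm_num)).differentiableAt (by norm_num))

lemma aux_fderiv2_const_mul (q : E → ℝ) (c : ℝ) (x : E) (hq : ContDiffAt ℝ 2 q x) :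
    fderiv ℝ (fderiv ℝ (fun y => c * q y)) x = c • fderiv ℝ (fderiv ℝ q) x := by
  have hevq : ∀ᶠ y in nhds x, DifferentiableAt ℝ q y :=
    (hq.eventually (by norm_num)).mono fun y hy => hy.differentiableAt (by norm_num)
  have hev : ∀ᶠ y in nhds x, fderiv ℝ (fun y => c * q y) y = c • fderiv ℝ q y := by
    filter_upwards [hevq] with y h1
    exact fderiv_const_mul h1 c
  rw [Filter.EventuallyEq.fderiv_eq hev]
  exact fderiv_const_smul ((hq.fderiv_right (m := 1) (by norm_num)).differentiableAt (by norm_num)) c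

lemma aux_Lgen_add_mul (b : E → E) (f q : E → ℝ) (x : E) (c : ℝ)
    (hf : ContDiffAt ℝ 2 f x) (hq : ContDiffAt ℝ 2 q x) :
    Lgen b (fun y => f y + c * q y) x = Lgen b f x + c * Lgen b q x := by
  have hcq : ContDiffAt ℝ 2 (fun y => c * q y) x := hq.const_smul c
  have hlap : lap (fun y => f y + c * q y) x = lap f x + c * lap q x := by
    unfold lap
    rw [Finset.mul_sum, ← Finset.sum_add_distrib]
    refine Finset.sum_congr rfl fun i _ => ?_
    rw [aux_itfd_two, aux_itfd_two, aux_itfd_two, aux_fderiv2_add f (fun y => c * q y) x hf hcq]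
    simp [aux_fderiv2_const_mul q c x hq]
  have hpd : ∀ i, pder (fun y => f y + c * q y) i x = pder f i x + c * pder q i x := by
    intro i
    unfold pder
    rw [fderiv_fun_add (hf.differentiableAt (by norm_num)) (hcq.differentiableAt (by norm_num)),
      fderiv_const_mul (hq.differentiableAt (by norm_num)) c]
    simp
  unfold Lgen
  rw [hlap]
  simp only [hpd]
  have : ∑ i : Fin d, b x i * (pder f i x + c * pder q i x)
      = (∑ i : Fin d, b x i * pder f i x) + c * ∑ i : Fin d, b x i * pder q i x := by
    rw [Finset.mul_sum, ← Finset.sum_add_distrib]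
    exact Finset.sum_congr rfl fun i _ => by ring
  rw [this]; ring

end Aux

section Aux2
set_option linter.unusedSectionVars false

variable {d : ℕ} [NeZero d]

local notation "E" => EuclideanSpace ℝ (Fin d)
local notation "P0" => (EuclideanSpace.proj (0 : Fin d) : EuclideanSpace ℝ (Fin d) →L[ℝ] ℝ)

lemma aux_proj_eq : (fun y : E => y 0) = ⇑P0 := rfl

lemma aux_fderiv_proj (x : E) : fderiv ℝ (fun y : E => y 0) x = P0 := by
  rw [aux_proj_eq]; exact ContinuousLinearMap.fderiv _

lemma aux_proj_single (i : Fin d) :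
    P0 (EuclideanSpace.single i (1:ℝ)) = if (0:Fin d) = i then (1:ℝ) else 0 := by
  have : P0 (EuclideanSpace.single i (1:ℝ)) = (EuclideanSpace.single i (1:ℝ)) 0 := rfl
  rw [this, EuclideanSpace.single_apply]

lemma aux_expHasFDeriv (l : ℝ) (y : E) :
    HasFDerivAt (fun y : E => Real.exp (l * y 0))
      ((Real.exp (l * y 0) * l) • P0) y := by
  have h1 : HasFDerivAt (fun y : E => l * y 0) (l • P0) y := by
    simpa using (ContinuousLinearMap.hasFDerivAt (x := y) P0).const_mul l
  have h2 := (Real.hasDerivAt_exp (l * y 0)).comp_hasFDerivAt y h1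
  exact h2.congr_fderiv (by rw [smul_smul, mul_comm])

lemma aux_Lgen_const (b : E → E) (c : ℝ) (x : E) : Lgen b (fun _ : E => c) x = 0 := by
  unfold Lgen lap pder
  simp [iteratedFDeriv_const_of_ne]

lemma aux_Lgen_proj (b : E → E) (x : E) : Lgen b (fun y : E => y 0) x = b x 0 := by
  have h2 : fderiv ℝ (fderiv ℝ (fun y : E => y 0)) x = 0 := by
    have : fderiv ℝ (fun y : E => y 0) = fun _ : E => P0 := funext fun y => aux_fderiv_proj y
    rw [this]; exact fderiv_const_apply _
  unfold Lgen lap pder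
  simp only [aux_itfd_two, h2, aux_fderiv_proj, aux_proj_single]
  simp [Finset.sum_ite_eq]

lemma aux_Lgen_exp (b : E → E) (l : ℝ) (x : E) :
    Lgen b (fun y : E => Real.exp (l * y 0)) x
      = (l^2/2 + b x 0 * l) * Real.exp (l * x 0) := by
  have hfd : fderiv ℝ (fun y : E => Real.exp (l * y 0))
      = fun y => (Real.exp (l * y 0) * l) • P0 := funext fun y => (aux_expHasFDeriv l y).fderiv
  have hs : HasFDerivAt (fun y : E => Real.exp (l * y 0) * l)
      (l • ((Real.exp (l * x 0) * l) • P0)) x := (aux_expHasFDeriv l x).mul_const l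
  have hA : HasFDerivAt (fun y : E => (Real.exp (l * y 0) * l) • P0)
      ((l • ((Real.exp (l * x 0) * l) • P0)).smulRight P0) x := hs.smul_const P0
  have h2 : fderiv ℝ (fderiv ℝ (fun y : E => Real.exp (l * y 0))) x
      = (l • ((Real.exp (l * x 0) * l) • P0)).smulRight P0 := by
    rw [hfd]; exact hA.fderiv
  have hpt : ∀ v, fderiv ℝ (fun y : E => Real.exp (l * y 0)) x v
      = (Real.exp (l * x 0) * l) * P0 v := fun v => by
    rw [(aux_expHasFDeriv l x).fderiv]; simp
  unfold Lgen lap pder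
  simp only [aux_itfd_two, h2, ContinuousLinearMap.smulRight_apply,
    ContinuousLinearMap.smul_apply, smul_eq_mul, hpt, aux_proj_single]
  simp [Finset.sum_ite_eq, mul_ite]
  ring

end Aux2
lemma aux_deriv2_nonpos {u : ℝ → ℝ} (hu : ContDiffAt ℝ 2 u 0)
    (hmax : IsLocalMax u 0) : deriv (deriv u) 0 ≤ 0 := by
  by_contra hcon
  push_neg at hcon
  have hd1 : deriv u 0 = 0 := hmax.deriv_eq_zero
  have hdu : DifferentiableAt ℝ (deriv u) 0 := by
    have h1 : ContDiffAt ℝ 1 (fderiv ℝ u) 0 := hu.fderiv_right (m := 1) (by norm_num)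
    have h2 : DifferentiableAt ℝ (fderiv ℝ u) 0 := h1.differentiableAt (by norm_num)
    have h3 : DifferentiableAt ℝ (fun y => fderiv ℝ u y 1) 0 :=
      (ContinuousLinearMap.apply ℝ ℝ (1:ℝ)).differentiableAt.comp 0 h2
    exact h3
  have hdd : HasDerivAt (deriv u) (deriv (deriv u) 0) 0 := hdu.hasDerivAt
  have hslope := hasDerivAt_iff_tendsto_slope.mp hdd
  have hpos : ∀ᶠ t in nhdsWithin (0:ℝ) {(0:ℝ)}ᶜ, 0 < slope (deriv u) 0 t :=
    hslope.eventually (eventually_gt_nhds hcon)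
  have hpos' : ∀ᶠ t in nhds (0:ℝ), t ∈ ({(0:ℝ)}ᶜ : Set ℝ) → 0 < slope (deriv u) 0 t :=
    eventually_nhdsWithin_iff.mp hpos
  have hev_diff : ∀ᶠ y in nhds (0:ℝ), DifferentiableAt ℝ u y :=
    (hu.eventually (by norm_num)).mono fun y hy => hy.differentiableAt (by norm_num)
  have hall : ∀ᶠ y in nhds (0:ℝ),
      (y ∈ ({(0:ℝ)}ᶜ : Set ℝ) → 0 < slope (deriv u) 0 y) ∧ DifferentiableAt ℝ u y ∧ u y ≤ u 0 := by
    filter_upwards [hpos', hev_diff, hmax] with y h1 h2 h3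
    exact ⟨h1, h2, h3⟩
  obtain ⟨r, hr, hball⟩ := Metric.eventually_nhds_iff.mp hall
  set r' := r / 2 with hr'
  have hr'0 : 0 < r' := by positivity
  have hmem : ∀ y ∈ Icc (0:ℝ) r', dist y 0 < r := by
    intro y hy
    rw [Real.dist_eq, sub_zero]
    rw [abs_of_nonneg hy.1]
    calc y ≤ r' := hy.2
    _ < r := by simp [hr']; linarith
  have hmono : StrictMonoOn u (Icc (0:ℝ) r') := by
    apply strictMonoOn_of_deriv_pos (convex_Icc _ _)
    · intro y hy
      exact ((hball (hmem y hy)).2.1).continuousAt.continuousWithinAt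
    · intro y hy
      rw [interior_Icc] at hy
      have hy0 : y ≠ 0 := ne_of_gt hy.1
      have hyr : dist y 0 < r := hmem y ⟨le_of_lt hy.1, le_of_lt hy.2⟩
      have hsl := (hball hyr).1 (by simp [hy0])
      rw [slope_def_field] at hsl
      have : slope (deriv u) 0 y = deriv u y / y := by
        rw [slope_def_field, hd1]
        field_simp
        ring
      rw [← slope_def_field, this] at hsl
      have := (div_pos_iff).mp hsl
      rcases this with ⟨h, _⟩ | ⟨_, hyneg⟩
      · exact h
      · linarith [hy.1]
  have h01 : u 0 < u r' := hmono ⟨le_refl _, le_of_lt hr'0⟩ ⟨le_of_lt hr'0, le_refl _⟩ hr'0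
  have : u r' ≤ u 0 := (hball (hmem r' ⟨le_of_lt hr'0, le_refl _⟩)).2.2
  linarith

section Aux3
set_option linter.unusedSectionVars false
variable {d : ℕ}
local notation "E" => EuclideanSpace ℝ (Fin d)

lemma aux3_add_single_apply (x : E) (j : Fin d) (c : ℝ) (i : Fin d) :
    (x + EuclideanSpace.single j c) i = x i + if i = j then c else 0 := by
  simp [EuclideanSpace.single_apply]

lemma aux3_sum_single_apply (n : Fin d → ℝ) (i : Fin d) :
    (∑ j : Fin d, n j • EuclideanSpace.single j (1:ℝ) : EuclideanSpace ℝ (Fin d)) i = n i := by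
  classical
  have : (∑ j : Fin d, n j • EuclideanSpace.single j (1:ℝ) : EuclideanSpace ℝ (Fin d)) i
      = ∑ j : Fin d, (n j • EuclideanSpace.single j (1:ℝ) : EuclideanSpace ℝ (Fin d)) i :=
    by rw [WithLp.ofLp_sum]; exact Finset.sum_apply i Finset.univ _
  rw [this]
  simp [EuclideanSpace.single_apply]

lemma aux3_per_nat (h : E → ℝ) (j : Fin d) (hp : ∀ x, h (x + EuclideanSpace.single j 1) = h x)
    (n : ℕ) : ∀ x : E, h (x + (n : ℝ) • EuclideanSpace.single j 1) = h x := by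
  induction n with
  | zero => intro x; simp
  | succ n ih =>
      intro x
      have key : x + ((n:ℝ)+1) • EuclideanSpace.single j (1:ℝ)
          = (x + (n:ℝ) • EuclideanSpace.single j 1) + EuclideanSpace.single j 1 := by
        rw [add_smul, one_smul]; abel
      push_cast
      rw [key, hp, ih]

lemma aux3_per_nat_neg (h : E → ℝ) (j : Fin d) (hp : ∀ x, h (x + EuclideanSpace.single j 1) = h x)
    (n : ℕ) : ∀ x : E, h (x - (n : ℝ) • EuclideanSpace.single j 1) = h x := by
  induction n with
  | zero => intro x; simp
  | succ n ih =>
      intro x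
      have key : (x - ((n:ℝ)+1) • EuclideanSpace.single j (1:ℝ)) + EuclideanSpace.single j 1
          = x - (n:ℝ) • EuclideanSpace.single j 1 := by
        rw [add_smul, one_smul]; abel
      have h2 := hp (x - ((n:ℝ)+1) • EuclideanSpace.single j (1:ℝ))
      rw [key] at h2
      push_cast
      rw [← h2, ih]

lemma aux3_per_int (h : E → ℝ) (j : Fin d) (hp : ∀ x, h (x + EuclideanSpace.single j 1) = h x)
    (m : ℤ) : ∀ x : E, h (x + (m : ℝ) • EuclideanSpace.single j 1) = h x := by
  obtain ⟨n, rfl | rfl⟩ := m.eq_nat_or_neg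
  · intro x; push_cast; exact aux3_per_nat h j hp n x
  · intro x
    have : x + ((-(n:ℤ) : ℤ) : ℝ) • EuclideanSpace.single j (1:ℝ)
        = x - (n:ℝ) • EuclideanSpace.single j 1 := by
      push_cast
      rw [neg_smul]; abel
    rw [this]
    exact aux3_per_nat_neg h j hp n x

lemma aux3_per_sum (h : E → ℝ) (P : Fin d → Prop)
    (hp : ∀ (x : E) (j : Fin d), P j → h (x + EuclideanSpace.single j 1) = h x)
    (m : Fin d → ℤ) (hm : ∀ j, m j ≠ 0 → P j) (x : E) :
    h (x + ∑ j : Fin d, (m j : ℝ) • EuclideanSpace.single j 1) = h x := by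
  classical
  have key : ∀ s : Finset (Fin d), ∀ x : E,
      h (x + ∑ j ∈ s, (m j : ℝ) • EuclideanSpace.single j 1) = h x := by
    intro s
    induction s using Finset.induction_on with
    | empty => intro x; simp
    | @insert a s ha ih =>
      intro x
      rw [Finset.sum_insert ha]
      have hre : x + ((m a : ℝ) • EuclideanSpace.single a (1:ℝ)
            + ∑ j ∈ s, (m j : ℝ) • EuclideanSpace.single j 1)
          = (x + ∑ j ∈ s, (m j : ℝ) • EuclideanSpace.single j 1)
            + (m a : ℝ) • EuclideanSpace.single a 1 := by abel
      rw [hre]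
      by_cases hPa : P a
      · rw [aux3_per_int h a (fun z => hp z a hPa) (m a)]
        exact ih x
      · have hz : m a = 0 := by by_contra h0; exact hPa (hm a h0)
        rw [hz]
        simpa using ih x
  exact key Finset.univ x

lemma aux3_per_reduce (h : E → ℝ) (P : Fin d → Prop) [DecidablePred P]
    (hp : ∀ (x : E) (j : Fin d), P j → h (x + EuclideanSpace.single j 1) = h x) (x : E) :
    ∃ y : E, h y = h x ∧ (∀ j, P j → y j ∈ Icc (0:ℝ) 1) ∧ (∀ j, ¬ P j → y j = x j) := by
  set m : Fin d → ℤ := fun j => if P j then -⌊x j⌋ else 0 with hm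
  set y : E := x + ∑ j : Fin d, (m j : ℝ) • EuclideanSpace.single j 1 with hy
  have hcoord : ∀ i, y i = x i + (m i : ℝ) := by
    intro i
    have : y i = x i + (∑ j : Fin d, (m j : ℝ) • EuclideanSpace.single j (1:ℝ)
        : EuclideanSpace ℝ (Fin d)) i := rfl
    rw [this, aux3_sum_single_apply]
  refine ⟨y, ?_, ?_, ?_⟩
  · exact aux3_per_sum h P hp m (fun j h0 => by by_contra hP; simp [hm, hP] at h0) x
  · intro j hP
    rw [hcoord j]
    simp only [hm, hP, if_true]
    push_cast
    constructor
    · have := Int.fract_nonneg (x j)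
      rw [Int.fract] at this; linarith
    · have := Int.fract_lt_one (x j)
      rw [Int.fract] at this; linarith
  · intro j hP
    rw [hcoord j]
    simp [hm, hP]

lemma aux3_isCompact_block (I : Fin d → Set ℝ) (hI : ∀ i, IsCompact (I i)) :
    IsCompact {y : E | ∀ i, y i ∈ I i} := by
  have heq : {y : E | ∀ i, y i ∈ I i}
      = (⇑(EuclideanSpace.equiv (Fin d) ℝ)) ⁻¹' (Set.univ.pi I) := by
    ext y; simp [Set.mem_pi]
  rw [heq]
  exact (EuclideanSpace.equiv (Fin d) ℝ).toHomeomorph.isCompact_preimage.mpr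
    (isCompact_univ_pi fun i => hI i)

lemma aux3_bounded_of_periodic_cont (h : E → ℝ) (hc : Continuous h)
    (hp : ∀ (x : E) (j : Fin d), h (x + EuclideanSpace.single j 1) = h x) :
    ∃ M, ∀ x, |h x| ≤ M := by
  classical
  obtain ⟨C, hC⟩ := (aux3_isCompact_block (fun _ => Icc (0:ℝ) 1)
    (fun _ => isCompact_Icc)).exists_bound_of_continuousOn hc.continuousOn
  refine ⟨C, fun x => ?_⟩
  obtain ⟨y, hyx, hyI, -⟩ := aux3_per_reduce h (fun _ => True) (fun x j _ => hp x j) x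
  rw [← hyx]
  simpa [Real.norm_eq_abs] using hC y (fun i => hyI i trivial)

end Aux3

section MP
set_option linter.unusedSectionVars false
variable {d : ℕ} [NeZero d]
local notation "E" => EuclideanSpace ℝ (Fin d)

set_option maxHeartbeats 1000000 in
lemma max_principle (b : E → E) (B : ℝ) (hB : ∀ x : E, |b x 0| ≤ B)
    (η k : ℝ) (hηk : η < k) (φ : E → ℝ)
    (hcont : ContinuousOn φ {x : E | η ≤ x 0 ∧ x 0 ≤ k})
    (hC2 : ∀ x : E, η < x 0 → x 0 < k → ContDiffAt ℝ 2 φ x)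
    (hper : ∀ (x : E) (j : Fin d), j ≠ 0 → φ (x + EuclideanSpace.single j 1) = φ x)
    (hL : ∀ x : E, η < x 0 → x 0 < k → Lgen b φ x = 0)
    (hbd : ∀ x : E, x 0 = η ∨ x 0 = k → φ x ≤ 0) :
    ∀ x : E, η ≤ x 0 → x 0 ≤ k → φ x ≤ 0 := by
  classical
  have hB0 : 0 ≤ B := le_trans (abs_nonneg _) (hB 0)
  set l : ℝ := 2 * B + 1 with hldef
  have hl0 : 0 < l := by simp only [hldef]; linarith
  have hproj_cont : Continuous fun y : E => y 0 := by
    rw [aux_proj_eq]; exact ContinuousLinearMap.continuous _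
  have hqsm : ContDiff ℝ 2 fun y : E => Real.exp (l * y 0) := by
    have hc0 : ContDiff ℝ 2 (fun y : E => y 0) := by
      rw [aux_proj_eq]; exact ContinuousLinearMap.contDiff _
    have h1 : ContDiff ℝ 2 (fun y : E => l * y 0) := contDiff_const.mul hc0
    exact (Real.contDiff_exp.of_le le_top).comp h1
  have key : ∀ ε : ℝ, 0 < ε → ∀ x : E, η ≤ x 0 → x 0 ≤ k →
      φ x + ε * (Real.exp (l * x 0) - Real.exp (l * k)) ≤ 0 := by
    intro ε hε
    set q : E → ℝ := fun y => Real.exp (l * y 0) + (-1) * Real.exp (l * k) with hqdef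
    set ψ : E → ℝ := fun y => φ y + ε * q y with hψdef
    have hqc : ContDiff ℝ 2 q := by
      exact hqsm.add (contDiff_const.mul contDiff_const)
    have hψC2 : ∀ x : E, η < x 0 → x 0 < k → ContDiffAt ℝ 2 ψ x := fun x h1 h2 =>
      (hC2 x h1 h2).add (contDiffAt_const.mul hqc.contDiffAt)
    have hLq : ∀ x : E, Lgen b q x = (l^2/2 + b x 0 * l) * Real.exp (l * x 0) := by
      intro x
      have := aux_Lgen_add_mul b (fun y : E => Real.exp (l * y 0))
        (fun _ : E => Real.exp (l * k)) x (-1) hqsm.contDiffAt contDiffAt_const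
      rw [hqdef]
      rw [this, aux_Lgen_exp, aux_Lgen_const]
      ring
    have hψL : ∀ x : E, η < x 0 → x 0 < k → 0 < Lgen b ψ x := by
      intro x h1 h2
      have e1 : Lgen b ψ x = Lgen b φ x + ε * Lgen b q x :=
        aux_Lgen_add_mul b φ q x ε (hC2 x h1 h2) hqc.contDiffAt
      rw [e1, hL x h1 h2, hLq x, zero_add]
      have hble : -B ≤ b x 0 := (abs_le.mp (hB x)).1
      have hpos : 0 < l^2/2 + b x 0 * l := by nlinarith
      exact mul_pos hε (mul_pos hpos (Real.exp_pos _))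
    have hψcont : ContinuousOn ψ {x : E | η ≤ x 0 ∧ x 0 ≤ k} := by
      apply hcont.add
      apply Continuous.continuousOn
      exact continuous_const.mul ((Real.continuous_exp.comp
        (continuous_const.mul hproj_cont)).add (continuous_const.mul continuous_const))
    have hψper : ∀ (x : E) (j : Fin d), j ≠ 0 → ψ (x + EuclideanSpace.single j 1) = ψ x := by
      intro x j hj
      have h0 : (x + EuclideanSpace.single j 1 : EuclideanSpace ℝ (Fin d)) 0 = x 0 := by
        rw [aux3_add_single_apply]
        simp [(Ne.symm hj)]
      simp only [hψdef, hqdef, hper x j hj, h0]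
    set D : Set E := {y : E | ∀ i, y i ∈ (if i = 0 then Icc η k else Icc (0:ℝ) 1)} with hDdef
    have hDcomp : IsCompact D :=
      aux3_isCompact_block _ (fun i => by split <;> exact isCompact_Icc)
    have hDsub : D ⊆ {x : E | η ≤ x 0 ∧ x 0 ≤ k} := by
      intro y hy
      have := hy 0
      simp only [if_pos rfl, mem_Icc] at this
      exact ⟨this.1, this.2⟩
    have hDne : D.Nonempty := by
      refine ⟨EuclideanSpace.single 0 η, fun i => ?_⟩
      by_cases hi : i = 0
      · subst hi
        simp [EuclideanSpace.single_apply, le_of_lt hηk]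
      · simp [hi, EuclideanSpace.single_apply]
    obtain ⟨z, hzD, hzmax⟩ := hDcomp.exists_isMaxOn hDne (hψcont.mono hDsub)
    have hglob : ∀ x : E, η ≤ x 0 → x 0 ≤ k → ψ x ≤ ψ z := by
      intro x hx1 hx2
      obtain ⟨y, hyx, hyI, hy0⟩ := aux3_per_reduce ψ (fun j => j ≠ 0)
        (fun x j hj => hψper x j hj) x
      have hy00 : y 0 = x 0 := hy0 0 (by simp)
      have hyD : y ∈ D := by
        intro i
        by_cases hi : i = 0
        · subst hi
          simp only [if_pos rfl, mem_Icc, hy00]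
          exact ⟨hx1, hx2⟩
        · simp only [hi, if_neg hi]
          exact hyI i hi
      calc ψ x = ψ y := hyx.symm
        _ ≤ ψ z := hzmax hyD
    have hz0 : ψ z ≤ 0 := by
      have hz1 : η ≤ z 0 ∧ z 0 ≤ k := hDsub hzD
      have hbdy : ∀ w : E, w 0 = η ∨ w 0 = k → ψ w ≤ 0 := by
        intro w hw
        have hw0 : w 0 ≤ k := by
          rcases hw with h | h
          · rw [h]; exact le_of_lt hηk
          · rw [h]
        have hexple : Real.exp (l * w 0) ≤ Real.exp (l * k) :=
          Real.exp_le_exp.mpr (mul_le_mul_of_nonneg_left hw0 hl0.le)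
        have : ψ w = φ w + ε * (Real.exp (l * w 0) - Real.exp (l * k)) := by
          simp only [hψdef, hqdef]; ring
        rw [this]
        have h2 : ε * (Real.exp (l * w 0) - Real.exp (l * k)) ≤ 0 :=
          mul_nonpos_of_nonneg_of_nonpos hε.le (by linarith)
        linarith [hbd w hw]
      rcases eq_or_lt_of_le hz1.1 with hb1 | hb1
      · exact hbdy z (Or.inl hb1.symm)
      rcases eq_or_lt_of_le hz1.2 with hb2 | hb2
      · exact hbdy z (Or.inr hb2)
      exfalso
      have hopen : IsOpen {x : E | η < x 0 ∧ x 0 < k} :=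
        (isOpen_lt continuous_const hproj_cont).inter (isOpen_lt hproj_cont continuous_const)
      have hloc : IsLocalMax ψ z := by
        have hmem : {x : E | η < x 0 ∧ x 0 < k} ∈ nhds z := hopen.mem_nhds ⟨hb1, hb2⟩
        exact Filter.eventually_of_mem hmem fun y hy => hglob y (le_of_lt hy.1) (le_of_lt hy.2)
      have hψCz : ContDiffAt ℝ 2 ψ z := hψC2 z hb1 hb2
      have hfder : fderiv ℝ ψ z = 0 := hloc.fderiv_eq_zero
      have hlapz : ∀ i : Fin d,
          fderiv ℝ (fderiv ℝ ψ) z (EuclideanSpace.single i 1) (EuclideanSpace.single i 1) ≤ 0 := by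
        intro i
        set v : E := EuclideanSpace.single i 1 with hv
        have hz00 : z + (0:ℝ) • v = z := by simp
        have hline_cd : ContDiffAt ℝ 2 (fun t : ℝ => ψ (z + t • v)) 0 := by
          have haff : ContDiff ℝ 2 (fun t : ℝ => z + t • v) :=
            contDiff_const.add (contDiff_id.smul contDiff_const)
          have := hψCz
          rw [← hz00] at this
          exact this.comp 0 haff.contDiffAt
        have hlocline : IsLocalMax (fun t : ℝ => ψ (z + t • v)) 0 := by
          have htend : Filter.Tendsto (fun t : ℝ => z + t • v) (nhds 0) (nhds z) := by
            have hcz : Continuous fun t : ℝ => z + t • v :=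
              continuous_const.add (continuous_id.smul continuous_const)
            have := hcz.tendsto 0
            rwa [hz00] at this
          have hloc' : IsMaxFilter ψ (nhds z) (z + (0:ℝ) • v) := by rw [hz00]; exact hloc
          have := IsMaxFilter.comp_tendsto (g := fun t : ℝ => z + t • v) (b := (0:ℝ))
            (by exact hloc') htend
          exact this
        have := aux_deriv2_nonpos hline_cd hlocline
        rwa [aux_second_line ψ z v hψCz] at this
      have hLz : Lgen b ψ z ≤ 0 := by
        unfold Lgen lap pder
        rw [hfder]
        simp only [ContinuousLinearMap.zero_apply, mul_zero, Finset.sum_const_zero, add_zero]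
        have hsum : ∑ i : Fin d, iteratedFDeriv ℝ 2 ψ z
            ![EuclideanSpace.single i 1, EuclideanSpace.single i 1] ≤ 0 := by
          apply Finset.sum_nonpos
          intro i _
          rw [aux_itfd_two]
          exact hlapz i
        linarith
      exact absurd (hψL z hb1 hb2) (not_lt.mpr hLz)
    intro x hx1 hx2
    have := le_trans (hglob x hx1 hx2) hz0
    simpa only [hψdef, hqdef, neg_one_mul, ← sub_eq_add_neg] using this
  intro x hx1 hx2
  by_contra hcp
  push_neg at hcp
  have hexple : Real.exp (l * x 0) ≤ Real.exp (l * k) :=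
    Real.exp_le_exp.mpr (mul_le_mul_of_nonneg_left hx2 hl0.le)
  have hεpos : 0 < φ x / (2 * (Real.exp (l * k) + 1)) := by positivity
  have := key _ hεpos x hx1 hx2
  have hEkpos : 0 < Real.exp (l * k) := Real.exp_pos _
  have h1 : -(Real.exp (l * k) + 1) ≤ Real.exp (l * x 0) - Real.exp (l * k) := by
    linarith [Real.exp_pos (l * x 0)]
  have h2 := mul_le_mul_of_nonneg_left h1 hεpos.le
  have h3 : φ x / (2 * (Real.exp (l * k) + 1)) * (-(Real.exp (l * k) + 1)) = -(φ x / 2) := by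
    field_simp
  linarith

end MP

set_option maxHeartbeats 1000000 in
/-- Two-sided bound, via the corrector `g` (with `L g = b_{+,1}`) and the
constant `K = η + 1 + 3 sup |g|`, for a bounded solution `f` of `L f = 0` in the strip
`{η ≤ x₁ ≤ k}`, periodic in the directions parallel to the interface, with boundary values
`f = 1` on `{x₁ = η}` and `f = 0` on `{x₁ = k}`:
`1 − (x₁ + K)/k ≤ f(x) ≤ 1 − (x₁ − K)/k`. -/
theorem strip_exit_probability_bounds {d : ℕ} [NeZero d]
    (b : EuclideanSpace ℝ (Fin d) → EuclideanSpace ℝ (Fin d))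
    (hb : ContDiff ℝ (⊤ : ℕ∞) b)
    (hbper : ∀ (x : EuclideanSpace ℝ (Fin d)) (i : Fin d),
      b (x + EuclideanSpace.single i 1) = b x)
    (g : EuclideanSpace ℝ (Fin d) → ℝ) (hg : ContDiff ℝ (⊤ : ℕ∞) g)
    (hgper : ∀ (x : EuclideanSpace ℝ (Fin d)) (i : Fin d),
      g (x + EuclideanSpace.single i 1) = g x)
    (hLg : ∀ x, Lgen b g x = b x 0)
    (η : ℝ) (hη : 0 ≤ η) :
    ∀ k : ℝ, η < k → ∀ f : EuclideanSpace ℝ (Fin d) → ℝ,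
      (∃ M : ℝ, ∀ x, |f x| ≤ M) →
      ContinuousOn f {x | η ≤ x 0 ∧ x 0 ≤ k} →
      ContDiffOn ℝ 2 f {x | η < x 0 ∧ x 0 < k} →
      (∀ (x : EuclideanSpace ℝ (Fin d)) (j : Fin d), j ≠ 0 →
        f (x + EuclideanSpace.single j 1) = f x) →
      (∀ x : EuclideanSpace ℝ (Fin d), η < x 0 → x 0 < k → Lgen b f x = 0) →
      (∀ x : EuclideanSpace ℝ (Fin d), x 0 = η → f x = 1) →
      (∀ x : EuclideanSpace ℝ (Fin d), x 0 = k → f x = 0) →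
      ∀ x : EuclideanSpace ℝ (Fin d), η ≤ x 0 → x 0 ≤ k →
        1 - (x 0 + (η + 1 + 3 * ⨆ y, |g y|)) / k ≤ f x ∧
          f x ≤ 1 - (x 0 - (η + 1 + 3 * ⨆ y, |g y|)) / k := by
  classical
  obtain ⟨M0, hM0⟩ := aux3_bounded_of_periodic_cont g hg.continuous hgper
  have hbdd : BddAbove (Set.range fun y : EuclideanSpace ℝ (Fin d) => |g y|) :=
    ⟨M0, by rintro _ ⟨y, rfl⟩; exact hM0 y⟩
  set Mg : ℝ := ⨆ y : EuclideanSpace ℝ (Fin d), |g y| with hMgdef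
  have hMg : ∀ y, |g y| ≤ Mg := fun y => le_ciSup hbdd y
  have hMg0 : 0 ≤ Mg := le_trans (abs_nonneg _) (hMg 0)
  have hc0 : ContDiff ℝ 2 (fun y : EuclideanSpace ℝ (Fin d) => y 0) := by
    rw [aux_proj_eq]; exact ContinuousLinearMap.contDiff _
  obtain ⟨B, hB⟩ := aux3_bounded_of_periodic_cont (fun x => b x 0)
    (hc0.continuous.comp hb.continuous) (fun x j => by show b (x + EuclideanSpace.single j 1) 0 = b x 0; rw [hbper])
  intro k hk f hfbd hfcont hfC2 hfper hLf hfη hfk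
  have hk0 : 0 < k := lt_of_le_of_lt hη hk
  have hproj_cont : Continuous fun y : EuclideanSpace ℝ (Fin d) => y 0 := hc0.continuous
  have hopen : IsOpen {x : EuclideanSpace ℝ (Fin d) | η < x 0 ∧ x 0 < k} :=
    (isOpen_lt continuous_const hproj_cont).inter (isOpen_lt hproj_cont continuous_const)
  have hfC2at : ∀ x : EuclideanSpace ℝ (Fin d), η < x 0 → x 0 < k → ContDiffAt ℝ 2 f x :=
    fun x h1 h2 => hfC2.contDiffAt (hopen.mem_nhds ⟨h1, h2⟩)
  have hgc2 : ContDiff ℝ 2 g := hg.of_le (WithTop.coe_le_coe.mpr le_top)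
  have hwsm : ContDiff ℝ 2 (fun y : EuclideanSpace ℝ (Fin d) => y 0 + (-1) * g y) :=
    hc0.add (contDiff_const.mul hgc2)
  have hLw : ∀ y : EuclideanSpace ℝ (Fin d),
      Lgen b (fun y : EuclideanSpace ℝ (Fin d) => y 0 + (-1) * g y) y = 0 := by
    intro y
    rw [aux_Lgen_add_mul b _ g y (-1) hc0.contDiffAt hgc2.contDiffAt, aux_Lgen_proj, hLg]
    ring
  have hwsingle : ∀ (x : EuclideanSpace ℝ (Fin d)) (j : Fin d), j ≠ 0 →
      (x + EuclideanSpace.single j 1 : EuclideanSpace ℝ (Fin d)) 0 = x 0 := by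
    intro x j hj
    rw [aux3_add_single_apply]
    simp [(Ne.symm hj)]
  intro x hx1 hx2
  constructor
  · -- lower bound: ψl ≤ f with ψl y = (1 - Mg/k) + (-(1/k)) * (y 0 - g y)
    set ψl : EuclideanSpace ℝ (Fin d) → ℝ :=
      fun y => (1 - Mg / k) + (-(1/k)) * (y 0 + (-1) * g y) with hψldef
    have hψlsm : ContDiff ℝ 2 ψl := contDiff_const.add (contDiff_const.mul hwsm)
    have hLψl : ∀ y, Lgen b ψl y = 0 := by
      intro y
      rw [hψldef, aux_Lgen_add_mul b (fun _ => (1 - Mg / k)) _ y (-(1/k))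
        contDiffAt_const hwsm.contDiffAt, aux_Lgen_const, hLw]
      ring
    set φl : EuclideanSpace ℝ (Fin d) → ℝ := fun y => ψl y + (-1) * f y with hφldef
    have hφl0 : ∀ z : EuclideanSpace ℝ (Fin d), η ≤ z 0 → z 0 ≤ k → φl z ≤ 0 := by
      apply max_principle b B hB η k hk φl
      · exact (hψlsm.continuous.continuousOn).add (continuousOn_const.mul hfcont)
      · exact fun z h1 h2 => hψlsm.contDiffAt.add (contDiffAt_const.mul (hfC2at z h1 h2))
      · intro z j hj
        simp only [hφldef, hψldef, hfper z j hj, hwsingle z j hj, hgper z j]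
      · intro z h1 h2
        rw [hφldef, aux_Lgen_add_mul b ψl f z (-1) hψlsm.contDiffAt (hfC2at z h1 h2),
          hLψl, hLf z h1 h2]
        ring
      · intro z hz
        rcases hz with hzη | hzk
        · have hval : φl z = (g z - Mg - η) / k := by
            simp only [hφldef, hψldef, hfη z hzη, hzη]
            field_simp
            ring
          rw [hval]
          apply div_nonpos_of_nonpos_of_nonneg _ hk0.le
          have := (abs_le.mp (hMg z)).2
          linarith
        · have hval : φl z = (g z - Mg) / k := by
            simp only [hφldef, hψldef, hfk z hzk, hzk]
            field_simp
            ring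
          rw [hval]
          apply div_nonpos_of_nonpos_of_nonneg _ hk0.le
          have := (abs_le.mp (hMg z)).2
          linarith
    have h1 : ψl x ≤ f x := by
      have := hφl0 x hx1 hx2
      simp only [hφldef] at this
      linarith
    have h2 : 1 - (x 0 + (η + 1 + 3 * Mg)) / k ≤ ψl x := by
      have hnum : 0 ≤ (η + 1 + 3 * Mg) - Mg + g x := by
        have := (abs_le.mp (hMg x)).1
        linarith
      have heq : ψl x - (1 - (x 0 + (η + 1 + 3 * Mg)) / k)
          = ((η + 1 + 3 * Mg) - Mg + g x) / k := by
        simp only [hψldef]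
        field_simp
        ring
      have hpos : 0 ≤ ((η + 1 + 3 * Mg) - Mg + g x) / k := div_nonneg hnum hk0.le
      linarith
    exact le_trans h2 h1
  · -- upper bound: f ≤ ψu with ψu y = (1 + (η + Mg)/k) + (-(1/k)) * (y 0 - g y)
    set ψu : EuclideanSpace ℝ (Fin d) → ℝ :=
      fun y => (1 + (η + Mg) / k) + (-(1/k)) * (y 0 + (-1) * g y) with hψudef
    have hψusm : ContDiff ℝ 2 ψu := contDiff_const.add (contDiff_const.mul hwsm)
    have hLψu : ∀ y, Lgen b ψu y = 0 := by
      intro y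
      rw [hψudef, aux_Lgen_add_mul b (fun _ => (1 + (η + Mg) / k)) _ y (-(1/k))
        contDiffAt_const hwsm.contDiffAt, aux_Lgen_const, hLw]
      ring
    set φu : EuclideanSpace ℝ (Fin d) → ℝ := fun y => f y + (-1) * ψu y with hφudef
    have hφu0 : ∀ z : EuclideanSpace ℝ (Fin d), η ≤ z 0 → z 0 ≤ k → φu z ≤ 0 := by
      apply max_principle b B hB η k hk φu
      · exact hfcont.add (continuousOn_const.mul (hψusm.continuous.continuousOn))
      · exact fun z h1 h2 => (hfC2at z h1 h2).add (contDiffAt_const.mul hψusm.contDiffAt)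
      · intro z j hj
        simp only [hφudef, hψudef, hfper z j hj, hwsingle z j hj, hgper z j]
      · intro z h1 h2
        rw [hφudef, aux_Lgen_add_mul b f ψu z (-1) (hfC2at z h1 h2) hψusm.contDiffAt,
          hLψu, hLf z h1 h2]
        ring
      · intro z hz
        rcases hz with hzη | hzk
        · have hval : φu z = (-(g z) - Mg) / k := by
            simp only [hφudef, hψudef, hfη z hzη, hzη]
            field_simp
            ring
          rw [hval]
          apply div_nonpos_of_nonpos_of_nonneg _ hk0.le
          have := (abs_le.mp (hMg z)).1
          linarith
        · have hval : φu z = (-(g z) - Mg - η) / k := by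
            simp only [hφudef, hψudef, hfk z hzk, hzk]
            field_simp
            ring
          rw [hval]
          apply div_nonpos_of_nonpos_of_nonneg _ hk0.le
          have := (abs_le.mp (hMg z)).1
          linarith
    have h1 : f x ≤ ψu x := by
      have := hφu0 x hx1 hx2
      simp only [hφudef] at this
      linarith
    have h2 : ψu x ≤ 1 - (x 0 - (η + 1 + 3 * Mg)) / k := by
      have hnum : 0 ≤ (η + 1 + 3 * Mg) - (η + Mg) - g x := by
        have := (abs_le.mp (hMg x)).2
        linarith
      have heq : (1 - (x 0 - (η + 1 + 3 * Mg)) / k) - ψu x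
          = ((η + 1 + 3 * Mg) - (η + Mg) - g x) / k := by
        simp only [hψudef]
        field_simp
        ring
      have hpos : 0 ≤ ((η + 1 + 3 * Mg) - (η + Mg) - g x) / k := div_nonneg hnum hk0.le
      linarith
    exact le_trans h1 h2

end
end

section
/- Let E be a compact metric space with its Borel σ-algebra and let P be a Markov kernel on E such that the map x ↦ P(x, ·) is continuous with respect to the total variation norm, and such that for all x, y ∈ E the probability measures P(x, ·) and P(y, ·) are mutually absolutely continuous. Then there exists η < 1 such that ‖ν_1 P − ν_2 P‖_TV ≤ η ‖ν_1 − ν_2‖_TV for all Borel probability measures ν_1, ν_2 on E. -/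
/-!
Write `ν₁ = ρ + μ₁` and `ν₂ = ρ + μ₂` with `ρ` the common part of `ν₁` and `ν₂`; then `μ₁` and
`μ₂` have the same mass `m ≤ tvDist ν₁ ν₂`, and `ν₁P − ν₂P = μ₁P − μ₂P`. Integrating
`P(x, s) − P(y, s) ≤ η` against `μ₁ ⊗ μ₂` gives `(μ₁P)(s) − (μ₂P)(s) ≤ η m` for
`η = sup_{x,y} tvDist (P x) (P y)`. Mutual absolute continuity makes each `tvDist (P x) (P y) < 1`
(the two measures overlap with positive mass), and continuity in total variation makes
`(x, y) ↦ tvDist (P x) (P y)` upper semicontinuous, so on the compact space `E × E` the supremum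
is attained and is `< 1`.
-/

open MeasureTheory ProbabilityTheory Filter Topology

/-- Total variation distance between two measures:
`tvDist μ ν = sup { |μ(s) − ν(s)| : s measurable }`. (For probability measures this is
one half of the total variation norm of `μ − ν`; the statement below is invariant under
this choice of normalisation.) -/
noncomputable def tvDist {E : Type*} [MeasurableSpace E] (μ ν : Measure E) : ENNReal :=
  ⨆ (s : Set E) (_ : MeasurableSet s), (μ s - ν s) + (ν s - μ s)

open Set

section TotalVariation

variable {E : Type*} [MeasurableSpace E]

lemma sub_apply_le_tvDist (μ ν : Measure E) {s : Set E} (hs : MeasurableSet s) :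
    μ s - ν s ≤ tvDist μ ν :=
  le_self_add.trans <|
    le_iSup₂ (f := fun (s : Set E) (_ : MeasurableSet s) => (μ s - ν s) + (ν s - μ s)) s hs

lemma tvDist_le_of_forall_sub_le {μ ν : Measure E} {c : ENNReal}
    (h₁ : ∀ s, MeasurableSet s → μ s - ν s ≤ c) (h₂ : ∀ s, MeasurableSet s → ν s - μ s ≤ c) :
    tvDist μ ν ≤ c := by
  refine iSup₂_le fun s hs => ?_
  rcases le_total (μ s) (ν s) with h | h
  · rw [tsub_eq_zero_of_le h, zero_add]; exact h₂ s hs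
  · rw [tsub_eq_zero_of_le h, add_zero]; exact h₁ s hs

lemma tvDist_comm (μ ν : Measure E) : tvDist μ ν = tvDist ν μ := by
  simp only [tvDist, add_comm (μ _ - ν _)]

lemma tvDist_triangle (μ κ ν : Measure E) : tvDist μ ν ≤ tvDist μ κ + tvDist κ ν := by
  refine tvDist_le_of_forall_sub_le (fun s hs => ?_) (fun s hs => ?_)
  · exact tsub_le_tsub_add_tsub.trans
      (add_le_add (sub_apply_le_tvDist μ κ hs) (sub_apply_le_tvDist κ ν hs))
  · rw [add_comm, tvDist_comm μ, tvDist_comm κ]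
    exact tsub_le_tsub_add_tsub.trans
      (add_le_add (sub_apply_le_tvDist ν κ hs) (sub_apply_le_tvDist κ μ hs))

lemma tvDist_le_one_sub_of_le (μ ν ρ : Measure E) [IsProbabilityMeasure μ]
    [IsProbabilityMeasure ν] (hμ : ρ ≤ μ) (hν : ρ ≤ ν) : tvDist μ ν ≤ 1 - ρ univ := by
  have : IsFiniteMeasure ρ := isFiniteMeasure_of_le μ hμ
  have key : ∀ μ' : Measure E, IsProbabilityMeasure μ' → ρ ≤ μ' →
      ∀ ν' : Measure E, ρ ≤ ν' → ∀ s, MeasurableSet s → μ' s - ν' s ≤ 1 - ρ univ := by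
    intro μ' _ hμ' ν' hν' s hs
    calc μ' s - ν' s ≤ μ' s - ρ s := tsub_le_tsub_left (hν' s) _
      _ = (μ' - ρ) s := (Measure.sub_apply hs hμ').symm
      _ ≤ (μ' - ρ) univ := measure_mono (subset_univ s)
      _ = 1 - ρ univ := by rw [Measure.sub_apply .univ hμ', measure_univ]
  exact tvDist_le_of_forall_sub_le (key μ ‹_› hμ ν hν) (key ν ‹_› hν μ hμ)

lemma tvDist_lt_one_of_mutuallyAbsolutelyContinuous (μ ν : Measure E) [IsProbabilityMeasure μ]
    [IsProbabilityMeasure ν] (hμν : μ ≪ ν) (hνμ : ν ≪ μ) : tvDist μ ν < 1 := by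
  set ρ := ν.withDensity fun x => min (μ.rnDeriv ν x) 1
  have hρμ : ρ ≤ μ := calc
    ρ ≤ ν.withDensity (μ.rnDeriv ν) := withDensity_mono (.of_forall fun x => min_le_left _ _)
    _ = μ := Measure.withDensity_rnDeriv_eq μ ν hμν
  have hρν : ρ ≤ ν := calc
    ρ ≤ ν.withDensity 1 := withDensity_mono (.of_forall fun x => min_le_right _ _)
    _ = ν := withDensity_one
  -- `dμ/dν > 0` holds `ν`-a.e., so the overlap `ρ` of `μ` and `ν` is not null
  have hνρ : ν ≪ ρ := withDensity_absolutelyContinuous'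
    ((Measure.measurable_rnDeriv μ ν).min measurable_const).aemeasurable
    (Eventually.mono (hνμ.ae_le (Measure.rnDeriv_pos hμν)) fun x hx => (lt_min hx one_pos).ne')
  have hρ : ρ univ ≠ 0 := fun h => by simpa using hνρ h
  exact (tvDist_le_one_sub_of_le μ ν ρ hρμ hρν).trans_lt
    (ENNReal.sub_lt_self ENNReal.one_ne_top one_ne_zero hρ)

end TotalVariation

section Contraction

variable {E : Type*} [MeasurableSpace E]

lemma lintegral_sub_lintegral_le_mul_of_measure_univ_eq {μ₁ μ₂ : Measure E} [IsFiniteMeasure μ₁]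
    (hμ : μ₁ univ = μ₂ univ) {h : E → ENNReal} (hh : Measurable h) {η : ENNReal}
    (hη : ∀ x y, h x - h y ≤ η) : ∫⁻ x, h x ∂μ₁ - ∫⁻ x, h x ∂μ₂ ≤ η * μ₁ univ := by
  set m := μ₁ univ
  rcases eq_or_ne m 0 with hm0 | hm0
  · simp [Measure.measure_univ_eq_zero.mp hm0]
  have hm : m ≠ ⊤ := measure_ne_top _ _
  -- multiplied by `m`, both sides become double integrals over `μ₁ ⊗ μ₂`
  refine (ENNReal.mul_le_mul_iff_left hm0 hm).mp ?_
  calc (∫⁻ x, h x ∂μ₁ - ∫⁻ x, h x ∂μ₂) * m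
      = ∫⁻ x, ∫⁻ _, h x ∂μ₂ ∂μ₁ - ∫⁻ _, ∫⁻ y, h y ∂μ₂ ∂μ₁ := by
        rw [ENNReal.sub_mul fun _ _ => hm]
        simp only [lintegral_const, ← hμ, lintegral_mul_const _ hh, m]
    _ ≤ ∫⁻ x, (∫⁻ _, h x ∂μ₂ - ∫⁻ y, h y ∂μ₂) ∂μ₁ := lintegral_sub_le _ _ measurable_const
    _ ≤ ∫⁻ x, ∫⁻ y, (h x - h y) ∂μ₂ ∂μ₁ := lintegral_mono fun x => lintegral_sub_le _ _ hh
    _ ≤ ∫⁻ _, ∫⁻ _, η ∂μ₂ ∂μ₁ := lintegral_mono fun x => lintegral_mono fun y => hη x y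
    _ = η * m * m := by simp only [lintegral_const, ← hμ, m]

lemma withDensity_eq_zero_of_eq_zero_on {μ : Measure E} {f : E → ENNReal} {s : Set E}
    (hs : MeasurableSet s) (hf : ∀ x ∈ s, f x = 0) : μ.withDensity f s = 0 := by
  rw [withDensity_apply _ hs, setLIntegral_congr_fun hs hf, lintegral_zero]

lemma withDensity_inf_add_withDensity_tsub {μ : Measure E} {f g : E → ENNReal}
    (hf : Measurable f) (hg : Measurable g) :
    μ.withDensity (f ⊓ g) + μ.withDensity (f - g) = μ.withDensity f := by
  rw [← withDensity_add_left (hf.inf hg)]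
  congr 1
  funext x
  exact (add_comm _ _).trans tsub_add_min

lemma exists_eq_add_eq_add_measure_univ_le_tvDist (ν₁ ν₂ : Measure E) [IsFiniteMeasure ν₁]
    [IsFiniteMeasure ν₂] (h : ν₁ univ = ν₂ univ) :
    ∃ ρ μ₁ μ₂ : Measure E, ν₁ = ρ + μ₁ ∧ ν₂ = ρ + μ₂ ∧ μ₁ univ = μ₂ univ ∧
      μ₁ univ ≤ tvDist ν₁ ν₂ := by
  set f := ν₁.rnDeriv (ν₁ + ν₂)
  set g := ν₂.rnDeriv (ν₁ + ν₂)
  have hf : Measurable f := Measure.measurable_rnDeriv _ _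
  have hg : Measurable g := Measure.measurable_rnDeriv _ _
  set ρ := (ν₁ + ν₂).withDensity (f ⊓ g)
  set μ₁ := (ν₁ + ν₂).withDensity (f - g)
  set μ₂ := (ν₁ + ν₂).withDensity (g - f)
  have h₁ : ν₁ = ρ + μ₁ :=
    ((withDensity_inf_add_withDensity_tsub hf hg).trans
      (Measure.withDensity_rnDeriv_eq _ _ (.add_right .rfl _))).symm
  have h₂ : ν₂ = ρ + μ₂ := by
    rw [show ρ = (ν₁ + ν₂).withDensity (g ⊓ f) by rw [inf_comm],
      withDensity_inf_add_withDensity_tsub hg hf,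
      Measure.withDensity_rnDeriv_eq _ _ (Measure.le_add_left le_rfl).absolutelyContinuous]
  have hρ : ∀ s, ρ s ≠ ⊤ := fun s =>
    ne_top_of_le_ne_top (measure_ne_top ν₁ s) (h₁ ▸ le_self_add)
  set S := {x | g x < f x}
  have hS : MeasurableSet S := measurableSet_lt hg hf
  have hμ₁S : μ₁ Sᶜ = 0 := withDensity_eq_zero_of_eq_zero_on hS.compl fun x hx =>
    tsub_eq_zero_of_le (not_lt.mp hx)
  have hμ₂S : μ₂ S = 0 := withDensity_eq_zero_of_eq_zero_on hS fun x hx =>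
    tsub_eq_zero_of_le (le_of_lt hx)
  refine ⟨ρ, μ₁, μ₂, h₁, h₂, ?_, ?_⟩
  · rw [h₁, h₂] at h
    exact (ENNReal.add_right_inj (hρ univ)).mp h
  · calc μ₁ univ = μ₁ S := by rw [← measure_add_measure_compl hS, hμ₁S, add_zero]
      _ = (ρ S + μ₁ S) - (ρ S + μ₂ S) := by rw [hμ₂S, add_zero, ENNReal.add_sub_cancel_left (hρ S)]
      _ = ν₁ S - ν₂ S := by rw [h₁, h₂]; rfl
      _ ≤ tvDist ν₁ ν₂ := sub_apply_le_tvDist ν₁ ν₂ hS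

lemma bind_apply_sub_bind_apply_le {F : Type*} [MeasurableSpace F] (P : Kernel E F)
    {η : ENNReal} (hη : ∀ x y, tvDist (P x) (P y) ≤ η) (ν₁ ν₂ : Measure E) [IsFiniteMeasure ν₁]
    [IsFiniteMeasure ν₂] (h : ν₁ univ = ν₂ univ) {s : Set F} (hs : MeasurableSet s) :
    (ν₁.bind fun x => P x) s - (ν₂.bind fun x => P x) s ≤ η * tvDist ν₁ ν₂ := by
  obtain ⟨ρ, μ₁, μ₂, rfl, rfl, hμ, hμ₁⟩ := exists_eq_add_eq_add_measure_univ_le_tvDist ν₁ ν₂ h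
  have : IsFiniteMeasure μ₁ := isFiniteMeasure_of_le (ρ + μ₁) (Measure.le_add_left le_rfl)
  simp only [Measure.bind_apply hs P.measurable.aemeasurable, lintegral_add_measure]
  calc _ ≤ ∫⁻ x, P x s ∂μ₁ - ∫⁻ x, P x s ∂μ₂ := add_tsub_add_le_tsub_left
    _ ≤ η * μ₁ univ := lintegral_sub_lintegral_le_mul_of_measure_univ_eq hμ
        (P.measurable_coe hs) fun x y => (sub_apply_le_tvDist _ _ hs).trans (hη x y)
    _ ≤ η * tvDist (ρ + μ₁) (ρ + μ₂) := by gcongr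

lemma tvDist_bind_le_mul {F : Type*} [MeasurableSpace F] (P : Kernel E F)
    {η : ENNReal} (hη : ∀ x y, tvDist (P x) (P y) ≤ η) (ν₁ ν₂ : Measure E) [IsFiniteMeasure ν₁]
    [IsFiniteMeasure ν₂] (h : ν₁ univ = ν₂ univ) :
    tvDist (ν₁.bind fun x => P x) (ν₂.bind fun x => P x) ≤ η * tvDist ν₁ ν₂ :=
  tvDist_le_of_forall_sub_le (fun _ => bind_apply_sub_bind_apply_le P hη ν₁ ν₂ h)
    (tvDist_comm ν₁ ν₂ ▸ fun _ => bind_apply_sub_bind_apply_le P hη ν₂ ν₁ h.symm)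

end Contraction

section Continuity

variable {E X : Type*} [MeasurableSpace E] [TopologicalSpace X] {κ : X → Measure E}

lemma upperSemicontinuous_tvDist
    (hκ : ∀ x₀, Tendsto (fun x => tvDist (κ x) (κ x₀)) (𝓝 x₀) (𝓝 0)) :
    UpperSemicontinuous fun p : X × X => tvDist (κ p.1) (κ p.2) := by
  intro p r hr
  have hbound : Tendsto (fun q : X × X => tvDist (κ q.1) (κ p.1) + tvDist (κ p.1) (κ p.2)
      + tvDist (κ q.2) (κ p.2)) (𝓝 p) (𝓝 (0 + tvDist (κ p.1) (κ p.2) + 0)) :=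
    (((hκ p.1).comp (continuous_fst.tendsto p)).add tendsto_const_nhds).add
      ((hκ p.2).comp (continuous_snd.tendsto p))
  rw [zero_add, add_zero] at hbound
  filter_upwards [hbound.eventually (gt_mem_nhds hr)] with q hq
  refine lt_of_le_of_lt ?_ hq
  calc tvDist (κ q.1) (κ q.2)
      ≤ tvDist (κ q.1) (κ p.1) + tvDist (κ p.1) (κ q.2) := tvDist_triangle _ _ _
    _ ≤ tvDist (κ q.1) (κ p.1) + (tvDist (κ p.1) (κ p.2) + tvDist (κ p.2) (κ q.2)) := by
        gcongr; exact tvDist_triangle _ _ _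
    _ = _ := by rw [tvDist_comm (κ p.2), add_assoc]

lemma exists_lt_one_forall_tvDist_le [CompactSpace X]
    (hκ : ∀ x₀, Tendsto (fun x => tvDist (κ x) (κ x₀)) (𝓝 x₀) (𝓝 0))
    (hlt : ∀ x y, tvDist (κ x) (κ y) < 1) : ∃ η < 1, ∀ x y, tvDist (κ x) (κ y) ≤ η := by
  rcases isEmpty_or_nonempty X with hX | hX
  · exact ⟨0, zero_lt_one, fun x => isEmptyElim x⟩
  obtain ⟨p, -, hp⟩ := ((upperSemicontinuous_tvDist hκ).upperSemicontinuousOn univ).exists_isMaxOn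
    univ_nonempty isCompact_univ
  exact ⟨_, hlt p.1 p.2, fun x y => hp (mem_univ (x, y))⟩

end Continuity

theorem doeblin_contraction_of_tv_continuous_general {E : Type*} [MetricSpace E] [CompactSpace E]
    [MeasurableSpace E] (P : Kernel E E) [IsMarkovKernel P]
    (hcont : ∀ x₀ : E, Tendsto (fun x => tvDist (P x) (P x₀)) (𝓝 x₀) (𝓝 0))
    (hac : ∀ x y : E, P x ≪ P y) :
    ∃ η : ENNReal, η < 1 ∧ ∀ ν₁ ν₂ : Measure E, IsProbabilityMeasure ν₁ →
      IsProbabilityMeasure ν₂ →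
      tvDist (ν₁.bind fun x => P x) (ν₂.bind fun x => P x) ≤ η * tvDist ν₁ ν₂ := by
  obtain ⟨η, hη, hPη⟩ := exists_lt_one_forall_tvDist_le hcont fun x y =>
    tvDist_lt_one_of_mutuallyAbsolutelyContinuous (P x) (P y) (hac x y) (hac y x)
  exact ⟨η, hη, fun ν₁ ν₂ _ _ => tvDist_bind_le_mul P hPη ν₁ ν₂ (by simp)⟩

/-- Let `E` be a compact metric space and `P` a Markov kernel on `E` such that
`x ↦ P(x, ·)` is continuous in total variation and all the measures `P(x, ·)` are mutually
absolutely continuous. Then `P` satisfies a Doeblin-type contraction: there is `η < 1` with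
`‖ν₁ P − ν₂ P‖_TV ≤ η ‖ν₁ − ν₂‖_TV` for all probability measures `ν₁, ν₂` on `E`. -/
theorem doeblin_contraction_of_tv_continuous {E : Type*} [MetricSpace E] [CompactSpace E]
    [MeasurableSpace E] [BorelSpace E] (P : Kernel E E) [IsMarkovKernel P]
    (hcont : ∀ x₀ : E, Tendsto (fun x => tvDist (P x) (P x₀)) (𝓝 x₀) (𝓝 0))
    (hac : ∀ x y : E, P x ≪ P y) :
    ∃ η : ENNReal, η < 1 ∧ ∀ ν₁ ν₂ : Measure E, IsProbabilityMeasure ν₁ →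
      IsProbabilityMeasure ν₂ →
      tvDist (ν₁.bind fun x => P x) (ν₂.bind fun x => P x) ≤ η * tvDist ν₁ ν₂ :=
  doeblin_contraction_of_tv_continuous_general P hcont hac
end
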